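/- arXiv:2407.09703 — 5 statements merged into one kernel-verified Lean document; each statement's English description precedes it below -/
import Mathlib

section
/- Let 1/2 < H < 1 and let u, s be real numbers with u ≠ s. Then ∫_{max(u,s)}^{∞} (t−s)^{H−3/2} (t−u)^{H−3/2} dt = |u−s|^{2H−2} · B(H−1/2, 2−2H), where B denotes the Beta function B(x,y) = Γ(x)Γ(y)/Γ(x+y). -/
open MeasureTheory

open Set Real in
private lemma betaIoo {a b : ℝ} (ha : 0 < a) (hb : 0 < b) :
    ∫ x in Ioo (0:ℝ) 1, x ^ (a - 1) * (1 - x) ^ (b - 1) =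
      Real.Gamma a * Real.Gamma b / Real.Gamma (a + b) := by
  have hab : (0:ℝ) < a + b := by linarith
  have hΓ : Complex.Gamma ((a:ℂ) + b) ≠ 0 := by
    rw [← Complex.ofReal_add, Complex.Gamma_ofReal]
    exact_mod_cast (Real.Gamma_pos_of_pos hab).ne'
  have hbeta : Complex.betaIntegral a b =
      (Complex.Gamma a * Complex.Gamma b) / Complex.Gamma ((a:ℂ) + b) := by
    rw [eq_div_iff hΓ, mul_comm, ← Complex.Gamma_mul_Gamma_eq_betaIntegral
      (by simpa using ha) (by simpa using hb)]
  have hIoc : ∫ x in Ioo (0:ℝ) 1, x ^ (a - 1) * (1 - x) ^ (b - 1) =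
      ∫ x in Ioc (0:ℝ) 1, x ^ (a - 1) * (1 - x) ^ (b - 1) :=
    (integral_Ioc_eq_integral_Ioo).symm
  have hcast : Complex.betaIntegral a b =
      ((∫ x in Ioc (0:ℝ) 1, x ^ (a - 1) * (1 - x) ^ (b - 1) : ℝ) : ℂ) := by
    rw [Complex.betaIntegral, intervalIntegral.integral_of_le zero_le_one]
    refine Eq.trans (setIntegral_congr_fun measurableSet_Ioc fun x hx => ?_) integral_ofReal
    obtain ⟨hx0, hx1⟩ := hx
    rw [show ((a:ℂ) - 1) = ((a - 1 : ℝ) : ℂ) by push_cast; ring,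
      show ((b:ℂ) - 1) = ((b - 1 : ℝ) : ℂ) by push_cast; ring,
      show (1 - (x:ℂ)) = ((1 - x : ℝ) : ℂ) by push_cast; ring,
      ← Complex.ofReal_cpow hx0.le, ← Complex.ofReal_cpow (by linarith),
      ← Complex.ofReal_mul]
    norm_cast
  have := hbeta.symm.trans hcast
  rw [show ((a:ℂ) + b) = ((a + b : ℝ) : ℂ) by push_cast; ring, Complex.Gamma_ofReal,
    Complex.Gamma_ofReal, Complex.Gamma_ofReal, ← Complex.ofReal_mul,
    ← Complex.ofReal_div] at this
  rw [hIoc]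
  exact_mod_cast this.symm

open Set Real in
private lemma betaIoi (a b : ℝ) :
    ∫ x in Ioo (0:ℝ) 1, x ^ (a - 1) * (1 - x) ^ (b - 1) =
      ∫ y in Ioi (0:ℝ), y ^ (a - 1) * (1 + y) ^ (-(a + b)) := by
  have himg : (fun y : ℝ => y / (1 + y)) '' Ioi 0 = Ioo 0 1 := by
    ext x
    constructor
    · rintro ⟨y, hy, rfl⟩
      have hy' := mem_Ioi.mp hy
      have h1 : (0:ℝ) < 1 + y := by linarith
      exact ⟨by positivity, by rw [div_lt_one h1]; linarith⟩
    · rintro ⟨hx0, hx1⟩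
      refine ⟨x / (1 - x), mem_Ioi.mpr (div_pos hx0 (by linarith)), ?_⟩
      have : (1:ℝ) - x ≠ 0 := by linarith
      field_simp
      ring
  have hderiv : ∀ y ∈ Ioi (0:ℝ), HasDerivWithinAt (fun y : ℝ => y / (1 + y))
      (((1 + y)^2)⁻¹) (Ioi 0) y := by
    intro y hy
    have hy' := mem_Ioi.mp hy
    have h1 : (1:ℝ) + y ≠ 0 := by positivity
    have : HasDerivAt (fun y : ℝ => y / (1 + y)) ((1 * (1 + y) - y * 1) / (1 + y) ^ 2) y :=
      (hasDerivAt_id y).div ((hasDerivAt_id y).const_add 1) h1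
    rw [show ((1 + y) ^ 2)⁻¹ = (1 * (1 + y) - y * 1) / (1 + y) ^ 2 by ring]
    exact this.hasDerivWithinAt
  have hinj : Set.InjOn (fun y : ℝ => y / (1 + y)) (Ioi 0) := by
    intro y hy z hz h
    have hy' := mem_Ioi.mp hy
    have hz' := mem_Ioi.mp hz
    have h1 : (1:ℝ) + y ≠ 0 := by positivity
    have h2 : (1:ℝ) + z ≠ 0 := by positivity
    field_simp at h
    linarith
  rw [← himg, integral_image_eq_integral_abs_deriv_smul measurableSet_Ioi hderiv hinj]
  refine setIntegral_congr_fun measurableSet_Ioi fun y hy => ?_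
  have hy' : (0:ℝ) < y := mem_Ioi.mp hy
  have h1 : (0:ℝ) < 1 + y := by linarith
  rw [smul_eq_mul, abs_of_pos (by positivity), div_rpow hy'.le h1.le,
    show (1:ℝ) - y / (1 + y) = 1 / (1 + y) by field_simp; ring,
    div_rpow zero_le_one h1.le, one_rpow, ← rpow_natCast (1 + y) 2,
    ← rpow_neg h1.le, div_eq_mul_inv, one_div, ← rpow_neg h1.le, ← rpow_neg h1.le,
    mul_comm ((1 + y) ^ (-((2:ℕ):ℝ))), mul_assoc, mul_assoc, ← rpow_add h1,
    ← rpow_add h1]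
  congr 1
  push_cast
  ring

open Set Real in
private lemma main_sub {p c : ℝ} (hc : 0 < c) (u : ℝ) (s : ℝ) (hcs : c = u - s) :
    ∫ t in Ioi u, (t - s) ^ p * (t - u) ^ p =
      c ^ (2 * p + 1) * ∫ y in Ioi (0:ℝ), y ^ p * (1 + y) ^ p := by
  have himg : (fun y : ℝ => u + c * y) '' Ioi 0 = Ioi u := by
    ext t
    constructor
    · rintro ⟨y, hy, rfl⟩
      have := mem_Ioi.mp hy
      exact mem_Ioi.mpr (by simp only []; nlinarith)
    · intro ht
      refine ⟨(t - u) / c, mem_Ioi.mpr (div_pos (by linarith [mem_Ioi.mp ht]) hc), ?_⟩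
      field_simp
      ring
  have hderiv : ∀ y ∈ Ioi (0:ℝ), HasDerivWithinAt (fun y : ℝ => u + c * y) c (Ioi 0) y := by
    intro y hy
    simpa using (((hasDerivAt_id y).const_mul c).const_add u).hasDerivWithinAt
  have hinj : Set.InjOn (fun y : ℝ => u + c * y) (Ioi 0) := fun y _ z _ h => by
    simp only [] at h
    have : c * y = c * z := by linarith
    exact mul_left_cancel₀ hc.ne' this
  rw [← himg, integral_image_eq_integral_abs_deriv_smul measurableSet_Ioi hderiv hinj,
    ← integral_const_mul]
  refine setIntegral_congr_fun measurableSet_Ioi fun y hy => ?_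
  have hy' : (0:ℝ) < y := mem_Ioi.mp hy
  have h1 : (0:ℝ) < 1 + y := by linarith
  rw [smul_eq_mul, abs_of_pos hc,
    show u + c * y - s = c * (1 + y) by rw [hcs]; ring,
    show u + c * y - u = c * y by ring,
    mul_rpow hc.le h1.le, mul_rpow hc.le hy'.le,
    show (2 : ℝ) * p + 1 = p + p + 1 by ring,
    rpow_add hc, rpow_add hc, rpow_one]
  ring

open Set Real in
private lemma main_combined (H : ℝ) (hH : 1 / 2 < H) (hH1 : H < 1) :
    ∫ y in Ioi (0:ℝ), y ^ (H - 3/2) * (1 + y) ^ (H - 3/2) =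
      Real.Gamma (H - 1/2) * Real.Gamma (2 - 2*H) /
        Real.Gamma ((H - 1/2) + (2 - 2*H)) := by
  have ha : (0:ℝ) < H - 1/2 := by linarith
  have hb : (0:ℝ) < 2 - 2*H := by linarith
  have h := (betaIoi (H - 1/2) (2 - 2*H)).symm.trans (betaIoo ha hb)
  rw [show (H - 1/2) - 1 = H - 3/2 by ring,
    show -((H - 1/2) + (2 - 2*H)) = H - 3/2 by ring] at h
  exact h

/-- for `1/2 < H < 1` and `u ≠ s`,
`∫_{max(u,s)}^∞ (t−s)^{H−3/2}(t−u)^{H−3/2} dt = |u−s|^{2H−2} · B(H−1/2, 2−2H)`,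
where `B(x,y) = Γ(x)Γ(y)/Γ(x+y)` is the Beta function. -/
theorem integral_rpow_mul_rpow_Ioi_max (H : ℝ) (hH : 1 / 2 < H) (hH1 : H < 1)
    (u s : ℝ) (hus : u ≠ s) :
    ∫ t in Set.Ioi (max u s), (t - s) ^ (H - 3 / 2) * (t - u) ^ (H - 3 / 2) =
      |u - s| ^ (2 * H - 2) *
        (Real.Gamma (H - 1 / 2) * Real.Gamma (2 - 2 * H) /
          Real.Gamma ((H - 1 / 2) + (2 - 2 * H))) := by
  have hexp : 2 * (H - 3/2) + 1 = 2 * H - 2 := by ring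
  rcases lt_or_gt_of_ne hus with h | h
  · -- u < s : max = s
    have hmax : max u s = s := max_eq_right h.le
    have habs : |u - s| = s - u := by rw [abs_of_neg (by linarith)]; ring
    have hms := main_sub (p := H - 3/2) (c := s - u) (by linarith) s u rfl
    simp_rw [mul_comm ((_ - u) ^ (H - 3/2 : ℝ))] at hms
    rw [hmax, habs, show (H : ℝ) - 3/2 = H - 3 / 2 by norm_num] at *
    rw [hms, hexp, main_combined H hH hH1]
  · -- s < u : max = u
    have hmax : max u s = u := max_eq_left h.le
    have habs : |u - s| = u - s := abs_of_pos (by linarith)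
    have hms := main_sub (p := H - 3/2) (c := u - s) (by linarith) u s rfl
    rw [hmax, habs, show (H : ℝ) - 3/2 = H - 3 / 2 by norm_num] at *
    rw [hms, hexp, main_combined H hH hH1]
end

section
/- Let 0 < γ < 1/2. There exists a constant C > 0, depending only on γ, such that for every integer n ≥ 1, with δ = 1/n, and every u ∈ ℝⁿ, the Marchaud fractional derivative of the step function f_u (extended by 0 to ℝ) satisfies ∫₀^∞ (D₋^γ f_u(t))² dt ≤ C · δ^{1−2γ} · Σ_{i=0}^{n−1} u_i². -/
open MeasureTheory

/-- The step function `f_u = ∑ i u_i 𝟙_{(iδ, (i+1)δ]}` with `δ = 1/n`,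
associated with `u ∈ ℝⁿ`, supported in `(0,1]` and extended by `0` to `ℝ`. -/
noncomputable def stepFun (n : ℕ) (u : Fin n → ℝ) : ℝ → ℝ :=
  fun t => ∑ i : Fin n,
    u i * Set.indicator (Set.Ioc ((i : ℝ) * (1 / n)) (((i : ℝ) + 1) * (1 / n))) 1 t

/-- The Marchaud fractional derivative of order `γ`:
`D₋^γ h (t) = −(γ/Γ(1−γ)) ∫_t^∞ (s−t)^{−γ−1}(h(s)−h(t)) ds`. -/
noncomputable def marchaudDeriv (γ : ℝ) (h : ℝ → ℝ) (t : ℝ) : ℝ :=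
  -(γ / Real.Gamma (1 - γ)) * ∫ s in Set.Ioi t, (s - t) ^ (-γ - 1) * (h s - h t)

section Aux

open Set ENNReal

lemma measurable_stepFun (n : ℕ) (u : Fin n → ℝ) : Measurable (stepFun n u) := by
  apply Finset.measurable_sum
  intro i _
  exact (measurable_const.indicator measurableSet_Ioc).const_mul _

/-- shifting the argument of an interval indicator -/
lemma indicator_Ioc_shift (a b r t : ℝ) :
    (Ioc a b).indicator (1 : ℝ → ℝ) (r + t) = (Ioc (a - r) (b - r)).indicator 1 t := by
  simp only [Set.indicator_apply, Set.mem_Ioc]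
  refine if_congr ?_ rfl rfl
  constructor <;> rintro ⟨h1, h2⟩ <;> constructor <;> linarith

/-- difference of a shifted interval indicator and the original -/
lemma indicator_Ioc_sub (a b r : ℝ) (hr : 0 ≤ r) (hab : r ≤ b - a) (t : ℝ) :
    (Ioc (a - r) (b - r)).indicator (1 : ℝ → ℝ) t - (Ioc a b).indicator 1 t =
      (Ioc (a - r) a).indicator 1 t - (Ioc (b - r) b).indicator 1 t := by
  have h1 : Ioc (a - r) (b - r) = Ioc (a - r) a ∪ Ioc a (b - r) :=
    (Set.Ioc_union_Ioc_eq_Ioc (by linarith) (by linarith)).symm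
  have h2 : Ioc a b = Ioc a (b - r) ∪ Ioc (b - r) b :=
    (Set.Ioc_union_Ioc_eq_Ioc (by linarith) (by linarith)).symm
  rw [h1, h2, Set.indicator_union_of_disjoint (Set.Ioc_disjoint_Ioc_of_le le_rfl),
    Set.indicator_union_of_disjoint (Set.Ioc_disjoint_Ioc_of_le le_rfl)]
  simp only [Pi.add_apply]
  ring

/-- square of a sum of multiples of indicators of pairwise disjoint sets -/
lemma sq_sum_indicator (s : Finset ℕ) (c : ℕ → ℝ) (A : ℕ → Set ℝ)
    (hd : ∀ i ∈ s, ∀ j ∈ s, i ≠ j → ∀ t, t ∈ A i → t ∉ A j) (t : ℝ) :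
    (∑ j ∈ s, c j * (A j).indicator 1 t) ^ 2 = ∑ j ∈ s, (c j) ^ 2 * (A j).indicator 1 t := by
  classical
  induction s using Finset.induction_on with
  | empty => simp
  | insert a s' ha ih =>
    rw [Finset.sum_insert ha, Finset.sum_insert ha]
    have hd' : ∀ i ∈ s', ∀ j ∈ s', i ≠ j → ∀ t, t ∈ A i → t ∉ A j := fun i hi j hj hij =>
      hd i (Finset.mem_insert_of_mem hi) j (Finset.mem_insert_of_mem hj) hij
    by_cases hta : t ∈ A a
    · have hz : ∀ j ∈ s', c j * (A j).indicator 1 t = 0 := by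
        intro j hj
        have : t ∉ A j := hd a (Finset.mem_insert_self a s') j (Finset.mem_insert_of_mem hj)
          (by rintro rfl; exact ha hj) t hta
        simp [Set.indicator_of_notMem this]
      have hz2 : ∀ j ∈ s', (c j) ^ 2 * (A j).indicator 1 t = 0 := by
        intro j hj
        have : t ∉ A j := hd a (Finset.mem_insert_self a s') j (Finset.mem_insert_of_mem hj)
          (by rintro rfl; exact ha hj) t hta
        simp [Set.indicator_of_notMem this]
      rw [Finset.sum_eq_zero hz, Finset.sum_eq_zero hz2]
      simp [Set.indicator_of_mem hta]
    · simp [Set.indicator_of_notMem hta, ih hd']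

/-- lintegral of the square of a step function built from disjoint `Ioc`s -/
lemma lintegral_sq_step (s : Finset ℕ) (c p q : ℕ → ℝ) (hpq : ∀ j ∈ s, p j ≤ q j)
    (hd : ∀ i ∈ s, ∀ j ∈ s, i ≠ j → ∀ t : ℝ,
      t ∈ Ioc (p i) (q i) → t ∉ Ioc (p j) (q j)) :
    ∫⁻ t : ℝ, ENNReal.ofReal ((∑ j ∈ s, c j * (Ioc (p j) (q j)).indicator 1 t) ^ 2) =
      ∑ j ∈ s, ENNReal.ofReal ((c j) ^ 2 * (q j - p j)) := by
  have h1 : ∀ t : ℝ,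
      ENNReal.ofReal ((∑ j ∈ s, c j * (Ioc (p j) (q j)).indicator 1 t) ^ 2) =
      ∑ j ∈ s, (Ioc (p j) (q j)).indicator (fun _ => ENNReal.ofReal ((c j) ^ 2)) t := by
    intro t
    rw [sq_sum_indicator s c _ hd t, ENNReal.ofReal_sum_of_nonneg]
    · refine Finset.sum_congr rfl fun j hj => ?_
      by_cases h : t ∈ Ioc (p j) (q j) <;>
        simp [Set.indicator_of_mem, Set.indicator_of_notMem, h]
    · intro j hj
      exact mul_nonneg (sq_nonneg _) (Set.indicator_nonneg (fun _ _ => zero_le_one) t)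
  simp_rw [h1]
  rw [lintegral_finset_sum]
  · refine Finset.sum_congr rfl fun j hj => ?_
    rw [lintegral_indicator measurableSet_Ioc, setLIntegral_const, Real.volume_Ioc,
      ← ENNReal.ofReal_mul (by positivity)]
  · intro j hj
    exact measurable_const.indicator measurableSet_Ioc

lemma lintegral_Ioi_shift (F : ℝ → ℝ≥0∞) (t : ℝ) :
    ∫⁻ s in Ioi t, F s = ∫⁻ r in Ioi (0 : ℝ), F (r + t) := by
  have key : ∀ r : ℝ, (Ioi t).indicator F (r + t) = (Ioi 0).indicator (fun r => F (r + t)) r := by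
    intro r
    by_cases hr : 0 < r
    · rw [Set.indicator_of_mem (by simp [Set.mem_Ioi]; linarith),
        Set.indicator_of_mem (Set.mem_Ioi.2 hr)]
    · rw [Set.indicator_of_notMem (by simp [Set.mem_Ioi]; linarith),
        Set.indicator_of_notMem (by simpa using hr)]
  calc ∫⁻ s in Ioi t, F s = ∫⁻ s, (Ioi t).indicator F s := (lintegral_indicator measurableSet_Ioi _).symm
    _ = ∫⁻ r, (Ioi t).indicator F (r + t) := (lintegral_add_right_eq_self (fun s => (Ioi t).indicator F s) t).symm
    _ = ∫⁻ r, (Ioi 0).indicator (fun r => F (r + t)) r := by simp_rw [key]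
    _ = ∫⁻ r in Ioi (0:ℝ), F (r + t) := lintegral_indicator measurableSet_Ioi _

lemma integral_Ioi_shift (F : ℝ → ℝ) (t : ℝ) :
    ∫ s in Ioi t, F s = ∫ r in Ioi (0 : ℝ), F (r + t) := by
  have key : ∀ r : ℝ, (Ioi t).indicator F (r + t) = (Ioi 0).indicator (fun r => F (r + t)) r := by
    intro r
    by_cases hr : 0 < r
    · rw [Set.indicator_of_mem (by simp [Set.mem_Ioi]; linarith),
        Set.indicator_of_mem (Set.mem_Ioi.2 hr)]
    · rw [Set.indicator_of_notMem (by simp [Set.mem_Ioi]; linarith),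
        Set.indicator_of_notMem (by simpa using hr)]
  calc ∫ s in Ioi t, F s = ∫ s, (Ioi t).indicator F s := (integral_indicator measurableSet_Ioi).symm
    _ = ∫ r, (Ioi t).indicator F (r + t) := (integral_add_right_eq_self (fun s => (Ioi t).indicator F s) t).symm
    _ = ∫ r, (Ioi 0).indicator (fun r => F (r + t)) r := by simp_rw [key]
    _ = ∫ r in Ioi (0:ℝ), F (r + t) := integral_indicator measurableSet_Ioi

noncomputable def Useq (n : ℕ) (u : Fin n → ℝ) : ℕ → ℝ :=
  fun j => if h : j < n then u ⟨j, h⟩ else 0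

lemma stepFun_eq_range (n : ℕ) (u : Fin n → ℝ) (t : ℝ) :
    stepFun n u t = ∑ i ∈ Finset.range n,
      Useq n u i * (Ioc ((i : ℝ) * (1 / n)) (((i : ℝ) + 1) * (1 / n))).indicator 1 t := by
  rw [stepFun, ← Fin.sum_univ_eq_sum_range
    (fun i => Useq n u i * (Ioc ((i : ℝ) * (1 / n)) (((i : ℝ) + 1) * (1 / n))).indicator 1 t) n]
  refine Finset.sum_congr rfl fun i _ => ?_
  simp [Useq, i.isLt]

lemma sum_sq_Useq (n : ℕ) (u : Fin n → ℝ) :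
    ∑ i ∈ Finset.range n, (Useq n u i) ^ 2 = ∑ i, u i ^ 2 := by
  rw [← Fin.sum_univ_eq_sum_range (fun i => (Useq n u i) ^ 2) n]
  refine Finset.sum_congr rfl fun i _ => ?_
  simp [Useq, i.isLt]

lemma stepFun_shift_sub (n : ℕ) (u : Fin n → ℝ) (r : ℝ) (hr : 0 ≤ r) (hrδ : r ≤ 1 / n) (t : ℝ) :
    stepFun n u (r + t) - stepFun n u t =
      ∑ j ∈ Finset.range (n + 1),
        (Useq n u j - (if j = 0 then 0 else Useq n u (j - 1))) *
          (Ioc ((j : ℝ) * (1 / n) - r) ((j : ℝ) * (1 / n))).indicator 1 t := by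
  have h1 : stepFun n u (r + t) = ∑ i ∈ Finset.range n,
      Useq n u i * (Ioc ((i : ℝ) * (1 / n) - r) (((i : ℝ) + 1) * (1 / n) - r)).indicator 1 t := by
    rw [stepFun_eq_range]
    refine Finset.sum_congr rfl fun i _ => ?_
    rw [indicator_Ioc_shift]
  rw [h1, stepFun_eq_range, ← Finset.sum_sub_distrib]
  have h2 : ∀ i ∈ Finset.range n,
      Useq n u i * (Ioc ((i : ℝ) * (1 / n) - r) (((i : ℝ) + 1) * (1 / n) - r)).indicator 1 t -
        Useq n u i * (Ioc ((i : ℝ) * (1 / n)) (((i : ℝ) + 1) * (1 / n))).indicator 1 t =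
      Useq n u i * (Ioc ((i : ℝ) * (1 / n) - r) ((i : ℝ) * (1 / n))).indicator 1 t -
        Useq n u i * (Ioc (((i : ℝ) + 1) * (1 / n) - r) (((i : ℝ) + 1) * (1 / n))).indicator 1 t := by
    intro i _
    rw [← mul_sub, ← mul_sub,
      indicator_Ioc_sub ((i : ℝ) * (1 / n)) (((i : ℝ) + 1) * (1 / n)) r hr
        (by have : ((i : ℝ) + 1) * (1 / n) - (i : ℝ) * (1 / n) = 1 / n := by ring
            rw [this]; exact hrδ)]
  rw [Finset.sum_congr rfl h2, Finset.sum_sub_distrib]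
  have h3 : ∀ j ∈ Finset.range (n + 1),
      (Useq n u j - (if j = 0 then 0 else Useq n u (j - 1))) *
          (Ioc ((j : ℝ) * (1 / n) - r) ((j : ℝ) * (1 / n))).indicator 1 t =
      Useq n u j * (Ioc ((j : ℝ) * (1 / n) - r) ((j : ℝ) * (1 / n))).indicator 1 t -
        (if j = 0 then 0 else Useq n u (j - 1)) *
          (Ioc ((j : ℝ) * (1 / n) - r) ((j : ℝ) * (1 / n))).indicator 1 t := by
    intro j _
    ring
  rw [Finset.sum_congr rfl h3, Finset.sum_sub_distrib]
  congr 1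
  · -- ∑_{range n} = ∑_{range (n+1)} since Useq n = 0
    rw [Finset.sum_range_succ]
    have : Useq n u n = 0 := by simp [Useq]
    rw [this]
    simp
  · -- reindexing
    rw [Finset.sum_range_succ'
      (fun j => (if j = 0 then 0 else Useq n u (j - 1)) *
        (Ioc ((j : ℝ) * (1 / n) - r) ((j : ℝ) * (1 / n))).indicator 1 t) n]
    simp only [Nat.succ_ne_zero, if_false, Nat.add_sub_cancel, Nat.cast_add, Nat.cast_one,
      if_true, zero_mul, add_zero]

lemma Ioc_shift_grid_disjoint (d r : ℝ) (hd : 0 < d) (hr0 : 0 ≤ r) (hr : r ≤ d) :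
    ∀ i j : ℕ, i ≠ j → ∀ t : ℝ,
      t ∈ Ioc ((i : ℝ) * d - r) ((i : ℝ) * d) → t ∉ Ioc ((j : ℝ) * d - r) ((j : ℝ) * d) := by
  intro i j hij t ht hmem
  rcases hij.lt_or_gt with h | h
  · have hle : (i : ℝ) + 1 ≤ (j : ℝ) := by exact_mod_cast Nat.succ_le_of_lt h
    have h1 : t ≤ (i : ℝ) * d := ht.2
    have h2 : (j : ℝ) * d - r < t := hmem.1
    nlinarith
  · have hle : (j : ℝ) + 1 ≤ (i : ℝ) := by exact_mod_cast Nat.succ_le_of_lt h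
    have h1 : t ≤ (j : ℝ) * d := hmem.2
    have h2 : (i : ℝ) * d - r < t := ht.1
    nlinarith

lemma Ioc_grid_disjoint (d : ℝ) (hd : 0 < d) :
    ∀ i j : ℕ, i ≠ j → ∀ t : ℝ,
      t ∈ Ioc ((i : ℝ) * d) (((i : ℝ) + 1) * d) → t ∉ Ioc ((j : ℝ) * d) (((j : ℝ) + 1) * d) := by
  intro i j hij t ht hmem
  rcases hij.lt_or_gt with h | h
  · have hle : (i : ℝ) + 1 ≤ (j : ℝ) := by exact_mod_cast Nat.succ_le_of_lt h
    have h1 : t ≤ ((i : ℝ) + 1) * d := ht.2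
    have h2 : (j : ℝ) * d < t := hmem.1
    nlinarith
  · have hle : (j : ℝ) + 1 ≤ (i : ℝ) := by exact_mod_cast Nat.succ_le_of_lt h
    have h1 : t ≤ ((j : ℝ) + 1) * d := hmem.2
    have h2 : (i : ℝ) * d < t := ht.1
    nlinarith

lemma lintegral_sq_stepFun (n : ℕ) (hn : 1 ≤ n) (u : Fin n → ℝ) :
    ∫⁻ t : ℝ, ENNReal.ofReal ((stepFun n u t) ^ 2) =
      ENNReal.ofReal ((1 / n) * ∑ i, u i ^ 2) := by
  have hδ : (0 : ℝ) < 1 / n := by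
    have : (0 : ℝ) < n := by exact_mod_cast hn
    positivity
  simp_rw [stepFun_eq_range]
  rw [lintegral_sq_step (Finset.range n) (Useq n u)
    (fun i => (i : ℝ) * (1 / n)) (fun i => ((i : ℝ) + 1) * (1 / n))
    (fun j _ => by nlinarith)
    (fun i _ j _ hij t => Ioc_grid_disjoint (1 / n) hδ i j hij t)]
  have h1 : ∀ j ∈ Finset.range n,
      ENNReal.ofReal ((Useq n u j) ^ 2 * (((j : ℝ) + 1) * (1 / n) - (j : ℝ) * (1 / n))) =
      ENNReal.ofReal ((Useq n u j) ^ 2 * (1 / n)) := by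
    intro j _
    congr 1
    ring
  rw [Finset.sum_congr rfl h1, ← ENNReal.ofReal_sum_of_nonneg
    (fun j _ => mul_nonneg (sq_nonneg _) hδ.le), ← Finset.sum_mul, sum_sq_Useq, mul_comm]

lemma step_translation (n : ℕ) (hn : 1 ≤ n) (u : Fin n → ℝ) (r : ℝ) (hr : 0 < r) :
    ∫⁻ t : ℝ, ENNReal.ofReal ((stepFun n u (r + t) - stepFun n u t) ^ 2) ≤
      ENNReal.ofReal (4 * min r (1 / n) * ∑ i, u i ^ 2) := by
  have hδ : (0 : ℝ) < 1 / n := by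
    have : (0 : ℝ) < n := by exact_mod_cast hn
    positivity
  have hS : (0 : ℝ) ≤ ∑ i, u i ^ 2 := Finset.sum_nonneg fun i _ => sq_nonneg _
  rcases le_or_gt r (1 / n) with hcase | hcase
  · -- small shift
    have hmin : min r (1 / n) = r := min_eq_left hcase
    simp_rw [stepFun_shift_sub n u r hr.le hcase]
    rw [lintegral_sq_step (Finset.range (n + 1))
      (fun j => Useq n u j - (if j = 0 then 0 else Useq n u (j - 1)))
      (fun j => (j : ℝ) * (1 / n) - r) (fun j => (j : ℝ) * (1 / n))
      (fun j _ => by linarith)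
      (fun i _ j _ hij t => Ioc_shift_grid_disjoint (1 / n) r hδ hr.le hcase i j hij t)]
    have h1 : ∀ j ∈ Finset.range (n + 1),
        ENNReal.ofReal ((Useq n u j - (if j = 0 then 0 else Useq n u (j - 1))) ^ 2 *
          ((j : ℝ) * (1 / n) - ((j : ℝ) * (1 / n) - r))) =
        ENNReal.ofReal ((Useq n u j - (if j = 0 then 0 else Useq n u (j - 1))) ^ 2 * r) := by
      intro j _
      congr 1
      ring
    rw [Finset.sum_congr rfl h1, ← ENNReal.ofReal_sum_of_nonneg
      (fun j _ => mul_nonneg (sq_nonneg _) hr.le), ← Finset.sum_mul, hmin]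
    apply ENNReal.ofReal_le_ofReal
    have hsum : ∑ j ∈ Finset.range (n + 1),
        (Useq n u j - (if j = 0 then 0 else Useq n u (j - 1))) ^ 2 ≤
        4 * ∑ i, u i ^ 2 := by
      have hb : ∀ j ∈ Finset.range (n + 1),
          (Useq n u j - (if j = 0 then 0 else Useq n u (j - 1))) ^ 2 ≤
          2 * (Useq n u j) ^ 2 + 2 * (if j = 0 then 0 else Useq n u (j - 1)) ^ 2 := by
        intro j _
        nlinarith [sq_nonneg (Useq n u j + (if j = 0 then 0 else Useq n u (j - 1)))]
      refine le_trans (Finset.sum_le_sum hb) ?_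
      rw [Finset.sum_add_distrib, ← Finset.mul_sum, ← Finset.mul_sum]
      have e1 : ∑ j ∈ Finset.range (n + 1), (Useq n u j) ^ 2 = ∑ i, u i ^ 2 := by
        rw [Finset.sum_range_succ]
        have : Useq n u n = 0 := by simp [Useq]
        rw [this, ← sum_sq_Useq n u]
        simp
      have e2 : ∑ j ∈ Finset.range (n + 1), (if j = 0 then (0:ℝ) else Useq n u (j - 1)) ^ 2 =
          ∑ i, u i ^ 2 := by
        rw [Finset.sum_range_succ'
          (fun j => (if j = 0 then (0:ℝ) else Useq n u (j - 1)) ^ 2) n]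
        simp only [Nat.succ_ne_zero, if_false, Nat.add_sub_cancel, if_true, add_zero]
        rw [← sum_sq_Useq n u]
        simp
      rw [e1, e2]
      linarith
    calc (∑ j ∈ Finset.range (n + 1),
        (Useq n u j - (if j = 0 then 0 else Useq n u (j - 1))) ^ 2) * r ≤
          (4 * ∑ i, u i ^ 2) * r := by
          apply mul_le_mul_of_nonneg_right hsum hr.le
      _ = 4 * r * ∑ i, u i ^ 2 := by ring
  · -- large shift
    have hmin : min r (1 / n) = 1 / n := min_eq_right hcase.le
    have hmeas1 : Measurable fun t : ℝ => ENNReal.ofReal (2 * stepFun n u (r + t) ^ 2) := by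
      apply ENNReal.measurable_ofReal.comp
      exact (((measurable_stepFun n u).comp (measurable_const.add measurable_id)).pow_const 2
        ).const_mul 2
    calc ∫⁻ t : ℝ, ENNReal.ofReal ((stepFun n u (r + t) - stepFun n u t) ^ 2)
        ≤ ∫⁻ t : ℝ, (ENNReal.ofReal (2 * stepFun n u (r + t) ^ 2) +
            ENNReal.ofReal (2 * stepFun n u t ^ 2)) := by
          apply lintegral_mono
          intro t
          dsimp only
          rw [← ENNReal.ofReal_add (by positivity) (by positivity)]
          apply ENNReal.ofReal_le_ofReal
          nlinarith [sq_nonneg (stepFun n u (r + t) + stepFun n u t)]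
      _ = (∫⁻ t : ℝ, ENNReal.ofReal (2 * stepFun n u (r + t) ^ 2)) +
            ∫⁻ t : ℝ, ENNReal.ofReal (2 * stepFun n u t ^ 2) := lintegral_add_left hmeas1 _
      _ = 4 * ENNReal.ofReal ((1 / n) * ∑ i, u i ^ 2) := by
          have k1 : ∀ x : ℝ, ENNReal.ofReal (2 * stepFun n u x ^ 2) =
              2 * ENNReal.ofReal (stepFun n u x ^ 2) := by
            intro x
            rw [ENNReal.ofReal_mul (by norm_num)]
            norm_num
          simp_rw [k1]
          rw [lintegral_const_mul' 2 _ (by norm_num), lintegral_const_mul' 2 _ (by norm_num)]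
          have k2 : ∫⁻ t : ℝ, ENNReal.ofReal (stepFun n u (r + t) ^ 2) =
              ∫⁻ t : ℝ, ENNReal.ofReal (stepFun n u t ^ 2) := by
            have : ∀ t : ℝ, r + t = t + r := fun t => add_comm r t
            simp_rw [this]
            exact lintegral_add_right_eq_self (fun x => ENNReal.ofReal (stepFun n u x ^ 2)) r
          rw [k2, lintegral_sq_stepFun n hn u]
          ring
      _ ≤ ENNReal.ofReal (4 * min r (1 / n) * ∑ i, u i ^ 2) := by
          rw [hmin, ENNReal.ofReal_mul (by positivity : (0:ℝ) ≤ 4 * (1 / (n:ℝ))),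
            ENNReal.ofReal_mul (by norm_num : (0:ℝ) ≤ 4), ENNReal.ofReal_ofNat, mul_assoc,
            ← ENNReal.ofReal_mul hδ.le]

lemma A_bound (γ d : ℝ) (hγ0 : 0 < γ) (hγ : γ < 1 / 2) (hd : 0 < d) :
    ∫⁻ r in Ioi (0 : ℝ), ENNReal.ofReal (r ^ (-γ - 1) * Real.sqrt (min r d)) ≤
      ENNReal.ofReal ((1 / (1 / 2 - γ) + 1 / γ) * d ^ ((1 : ℝ) / 2 - γ)) := by
  have h12 : (0 : ℝ) < 1 / 2 - γ := by linarith
  rw [← Set.Ioc_union_Ioi_eq_Ioi hd.le, lintegral_union measurableSet_Ioi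
    (Set.Ioc_disjoint_Ioi le_rfl)]
  have piece1 : ∫⁻ r in Ioc (0 : ℝ) d, ENNReal.ofReal (r ^ (-γ - 1) * Real.sqrt (min r d)) =
      ENNReal.ofReal (d ^ ((1 : ℝ) / 2 - γ) / (1 / 2 - γ)) := by
    have e1 : ∫⁻ r in Ioc (0 : ℝ) d, ENNReal.ofReal (r ^ (-γ - 1) * Real.sqrt (min r d)) =
        ∫⁻ r in Ioc (0 : ℝ) d, ENNReal.ofReal (r ^ ((1 : ℝ) / 2 - γ - 1)) := by
      refine setLIntegral_congr_fun measurableSet_Ioc ?_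
      intro r hr
      dsimp only
      rw [min_eq_left hr.2, Real.sqrt_eq_rpow, ← Real.rpow_add hr.1]
      congr 2
      ring
    rw [e1, ← ofReal_integral_eq_lintegral_ofReal]
    · congr 1
      rw [← intervalIntegral.integral_of_le hd.le,
        integral_rpow (Or.inl (by linarith : (-1 : ℝ) < (1 : ℝ) / 2 - γ - 1)),
        Real.zero_rpow (by linarith : (1 : ℝ) / 2 - γ - 1 + 1 ≠ 0)]
      norm_num
    · have : IntervalIntegrable (fun r : ℝ => r ^ ((1 : ℝ) / 2 - γ - 1)) volume 0 d :=
        intervalIntegral.intervalIntegrable_rpow' (by linarith)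
      rw [intervalIntegrable_iff, Set.uIoc_of_le hd.le] at this
      exact this
    · refine (ae_restrict_iff' measurableSet_Ioc).2 (Filter.Eventually.of_forall ?_)
      intro r hr
      exact Real.rpow_nonneg hr.1.le _
  have piece2 : ∫⁻ r in Ioi d, ENNReal.ofReal (r ^ (-γ - 1) * Real.sqrt (min r d)) =
      ENNReal.ofReal (d ^ ((1 : ℝ) / 2 - γ) / γ) := by
    have e1 : ∫⁻ r in Ioi d, ENNReal.ofReal (r ^ (-γ - 1) * Real.sqrt (min r d)) =
        ∫⁻ r in Ioi d, ENNReal.ofReal (Real.sqrt d * r ^ (-γ - 1)) := by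
      refine setLIntegral_congr_fun measurableSet_Ioi ?_
      intro r hr
      dsimp only
      rw [min_eq_right (le_of_lt (Set.mem_Ioi.1 hr)), mul_comm]
    rw [e1, ← ofReal_integral_eq_lintegral_ofReal]
    · congr 1
      rw [MeasureTheory.integral_const_mul, integral_Ioi_rpow_of_lt (by linarith) hd]
      rw [Real.sqrt_eq_rpow]
      have : -γ - 1 + 1 = -γ := by ring
      rw [this, neg_div_neg_eq, ← mul_div_assoc, ← Real.rpow_add hd]
      ring_nf
    · exact (integrableOn_Ioi_rpow_of_lt (by linarith) hd).const_mul _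
    · refine (ae_restrict_iff' measurableSet_Ioi).2 (Filter.Eventually.of_forall ?_)
      intro r hr
      exact mul_nonneg (Real.sqrt_nonneg _)
        (Real.rpow_nonneg (hd.trans (Set.mem_Ioi.1 hr)).le _)
  rw [piece1, piece2, ← ENNReal.ofReal_add (by positivity) (by positivity)]
  apply ENNReal.ofReal_le_ofReal
  have heq : d ^ ((1:ℝ)/2 - γ) / (1/2 - γ) + d ^ ((1:ℝ)/2 - γ) / γ =
      (1 / (1/2 - γ) + 1/γ) * d ^ ((1:ℝ)/2 - γ) := by
    field_simp
  exact le_of_eq heq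

end Aux

/-- for `0 < γ < 1/2` there is `C > 0`, depending only on `γ`, such
that for every `n ≥ 1` (with `δ = 1/n`) and every `u ∈ ℝⁿ`,
`∫₀^∞ (D₋^γ f_u)² ≤ C δ^{1−2γ} ∑ uᵢ²`. -/
theorem marchaud_stepFun_l2_bound (γ : ℝ) (hγ0 : 0 < γ) (hγ : γ < 1 / 2) :
    ∃ C : ℝ, 0 < C ∧ ∀ n : ℕ, 1 ≤ n → ∀ u : Fin n → ℝ,
      ∫ t in Set.Ioi (0:ℝ), (marchaudDeriv γ (stepFun n u) t) ^ 2 ≤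
        C * (1 / (n : ℝ)) ^ (1 - 2 * γ) * ∑ i, u i ^ 2 := by
  classical
  have hΓ : 0 < Real.Gamma (1 - γ) := Real.Gamma_pos_of_pos (by linarith)
  set c : ℝ := γ / Real.Gamma (1 - γ) with hc_def
  have hc : 0 < c := div_pos hγ0 hΓ
  have h12 : (0:ℝ) < 1/2 - γ := by linarith
  set K : ℝ := 1 / (1/2 - γ) + 1/γ with hK_def
  have hK : 0 < K := by positivity
  refine ⟨4 * c^2 * K^2, by positivity, ?_⟩
  intro n hn u
  have hfm : Measurable (stepFun n u) := measurable_stepFun n u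
  have hnR : (0:ℝ) < n := by exact_mod_cast hn
  have hδ : (0:ℝ) < 1 / n := by positivity
  have hS : (0:ℝ) ≤ ∑ i, u i ^ 2 := Finset.sum_nonneg fun i _ => sq_nonneg _
  -- shifted form of the Marchaud derivative
  have hform : ∀ t : ℝ, marchaudDeriv γ (stepFun n u) t =
      -c * ∫ r in Set.Ioi (0:ℝ), r ^ (-γ - 1) * (stepFun n u (r + t) - stepFun n u t) := by
    intro t
    rw [marchaudDeriv,
      integral_Ioi_shift (fun s => (s - t) ^ (-γ-1) * (stepFun n u s - stepFun n u t)) t]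
    congr 1
    refine integral_congr_ae (Filter.Eventually.of_forall fun r => ?_)
    simp [add_sub_cancel_right]
  -- measurability facts
  have hk : Measurable (fun x : ℝ => x ^ (-γ-1)) := by measurability
  have hG : Measurable (Function.uncurry
      fun t r : ℝ => stepFun n u (r + t) - stepFun n u t) :=
    (hfm.comp (measurable_snd.add measurable_fst)).sub (hfm.comp measurable_fst)
  have hH : Measurable (Function.uncurry
      fun t r : ℝ => r ^ (-γ-1) * (stepFun n u (r + t) - stepFun n u t)) :=
    (hk.comp measurable_snd).mul hG
  have hDm : AEStronglyMeasurable (fun t => (marchaudDeriv γ (stepFun n u) t)^2)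
      (volume.restrict (Set.Ioi 0)) := by
    have h1 : StronglyMeasurable (fun t : ℝ =>
        ∫ r in Set.Ioi (0:ℝ), r ^ (-γ-1) * (stepFun n u (r + t) - stepFun n u t)) :=
      MeasureTheory.StronglyMeasurable.integral_prod_right' (hH.stronglyMeasurable)
    have h2 : StronglyMeasurable (fun t => marchaudDeriv γ (stepFun n u) t) := by
      have he : (fun t => marchaudDeriv γ (stepFun n u) t) = fun t =>
          -c * ∫ r in Set.Ioi (0:ℝ), r ^ (-γ-1) * (stepFun n u (r + t) - stepFun n u t) :=
        funext hform
      rw [he]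
      exact stronglyMeasurable_const.mul h1
    have h3 : StronglyMeasurable (fun t => (marchaudDeriv γ (stepFun n u) t)^2) := by
      simp_rw [sq]
      exact h2.mul h2
    exact h3.aestronglyMeasurable
  -- the two auxiliary kernels
  have haF : Measurable (fun r : ℝ =>
      ENNReal.ofReal (Real.sqrt (r ^ (-γ-1) * Real.sqrt (min r (1/(n:ℝ)))))) := by
    apply ENNReal.measurable_ofReal.comp
    exact (hk.mul ((measurable_id.min measurable_const).sqrt)).sqrt
  have hbm : Measurable (Function.uncurry fun t r : ℝ =>
      (ENNReal.ofReal (Real.sqrt (r ^ (-γ-1) / Real.sqrt (min r (1/(n:ℝ)))) *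
        |stepFun n u (r + t) - stepFun n u t|))^2) := by
    apply Measurable.pow_const
    apply ENNReal.measurable_ofReal.comp
    exact (((hk.div ((measurable_id.min measurable_const).sqrt)).sqrt).comp
      measurable_snd).mul hG.abs
  -- pointwise factorization of the kernel
  have keyfact : ∀ t r : ℝ, 0 < r →
      ENNReal.ofReal (r ^ (-γ-1) * |stepFun n u (r + t) - stepFun n u t|) =
      ENNReal.ofReal (Real.sqrt (r ^ (-γ-1) * Real.sqrt (min r (1/(n:ℝ))))) *
        ENNReal.ofReal (Real.sqrt (r ^ (-γ-1) / Real.sqrt (min r (1/(n:ℝ)))) *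
          |stepFun n u (r + t) - stepFun n u t|) := by
    intro t r hr
    have hm : 0 < min r (1/(n:ℝ)) := lt_min hr hδ
    have hsm : 0 < Real.sqrt (min r (1/(n:ℝ))) := Real.sqrt_pos.2 hm
    have hkr : 0 ≤ r ^ (-γ-1) := Real.rpow_nonneg hr.le _
    rw [← ENNReal.ofReal_mul (Real.sqrt_nonneg _)]
    congr 1
    have hfac : Real.sqrt (r ^ (-γ-1) * Real.sqrt (min r (1/(n:ℝ)))) *
        Real.sqrt (r ^ (-γ-1) / Real.sqrt (min r (1/(n:ℝ)))) = r ^ (-γ-1) := by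
      rw [← Real.sqrt_mul (mul_nonneg hkr hsm.le)]
      have he : r ^ (-γ-1) * Real.sqrt (min r (1/(n:ℝ))) *
          (r ^ (-γ-1) / Real.sqrt (min r (1/(n:ℝ)))) = (r ^ (-γ-1))^2 := by
        field_simp
      rw [he, Real.sqrt_sq hkr]
    rw [← mul_assoc, hfac]
  have hbF : ∀ t : ℝ, Measurable (fun r : ℝ => ENNReal.ofReal (Real.sqrt (r ^ (-γ-1) / Real.sqrt (min r (1/(n:ℝ)))) * |stepFun n u (r + t) - stepFun n u t|)) := by
    intro t
    apply ENNReal.measurable_ofReal.comp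
    exact ((hk.div ((measurable_id.min measurable_const).sqrt)).sqrt).mul
      (((hfm.comp (measurable_id.add_const t)).sub measurable_const).abs)
  have h1 : ∀ t : ℝ, ENNReal.ofReal ((marchaudDeriv γ (stepFun n u) t)^2) ≤
      ENNReal.ofReal c ^ 2 * (∫⁻ r in Set.Ioi (0:ℝ), ENNReal.ofReal (Real.sqrt (r ^ (-γ-1) * Real.sqrt (min r (1/(n:ℝ))))) * ENNReal.ofReal (Real.sqrt (r ^ (-γ-1) / Real.sqrt (min r (1/(n:ℝ)))) * |stepFun n u (r + t) - stepFun n u t|)) ^ 2 := by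
    intro t
    have e2 : ENNReal.ofReal |marchaudDeriv γ (stepFun n u) t| ≤
        ENNReal.ofReal c * ∫⁻ r in Set.Ioi (0:ℝ), ENNReal.ofReal (Real.sqrt (r ^ (-γ-1) * Real.sqrt (min r (1/(n:ℝ))))) * ENNReal.ofReal (Real.sqrt (r ^ (-γ-1) / Real.sqrt (min r (1/(n:ℝ)))) * |stepFun n u (r + t) - stepFun n u t|) := by
      rw [hform t]
      have e3 : |(-c) * ∫ r in Set.Ioi (0:ℝ),
            r ^ (-γ-1) * (stepFun n u (r + t) - stepFun n u t)| =
          c * |∫ r in Set.Ioi (0:ℝ), r ^ (-γ-1) * (stepFun n u (r + t) - stepFun n u t)| := by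
        rw [abs_mul, abs_neg, abs_of_pos hc]
      rw [e3, ENNReal.ofReal_mul hc.le]
      refine mul_le_mul_right ?_ _
      calc ENNReal.ofReal |∫ r in Set.Ioi (0:ℝ),
            r ^ (-γ-1) * (stepFun n u (r + t) - stepFun n u t)|
          = ↑‖∫ r in Set.Ioi (0:ℝ), r ^ (-γ-1) * (stepFun n u (r + t) - stepFun n u t)‖₊ := by
            rw [← enorm_eq_nnnorm, ← ofReal_norm, Real.norm_eq_abs]
        _ ≤ ∫⁻ r in Set.Ioi (0:ℝ), ↑‖r ^ (-γ-1) * (stepFun n u (r + t) - stepFun n u t)‖₊ :=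
            enorm_integral_le_lintegral_enorm _
        _ = ∫⁻ r in Set.Ioi (0:ℝ), ENNReal.ofReal (Real.sqrt (r ^ (-γ-1) * Real.sqrt (min r (1/(n:ℝ))))) * ENNReal.ofReal (Real.sqrt (r ^ (-γ-1) / Real.sqrt (min r (1/(n:ℝ)))) * |stepFun n u (r + t) - stepFun n u t|) := by
            refine setLIntegral_congr_fun measurableSet_Ioi
              (fun r hr => ?_)
            rw [← enorm_eq_nnnorm, ← ofReal_norm, Real.norm_eq_abs, abs_mul,
              abs_of_nonneg (Real.rpow_nonneg (le_of_lt hr) _)]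
            exact keyfact t r hr
    calc ENNReal.ofReal ((marchaudDeriv γ (stepFun n u) t)^2)
        = (ENNReal.ofReal |marchaudDeriv γ (stepFun n u) t|)^2 := by
          rw [← ENNReal.ofReal_pow (abs_nonneg _), sq_abs]
      _ ≤ (ENNReal.ofReal c * ∫⁻ r in Set.Ioi (0:ℝ), ENNReal.ofReal (Real.sqrt (r ^ (-γ-1) * Real.sqrt (min r (1/(n:ℝ))))) * ENNReal.ofReal (Real.sqrt (r ^ (-γ-1) / Real.sqrt (min r (1/(n:ℝ)))) * |stepFun n u (r + t) - stepFun n u t|))^2 :=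
          pow_le_pow_left₀ (by positivity) e2 2
      _ = ENNReal.ofReal c ^ 2 *
            (∫⁻ r in Set.Ioi (0:ℝ), ENNReal.ofReal (Real.sqrt (r ^ (-γ-1) * Real.sqrt (min r (1/(n:ℝ))))) * ENNReal.ofReal (Real.sqrt (r ^ (-γ-1) / Real.sqrt (min r (1/(n:ℝ)))) * |stepFun n u (r + t) - stepFun n u t|)) ^ 2 := mul_pow _ _ 2
  have h2 : ∀ t : ℝ, (∫⁻ r in Set.Ioi (0:ℝ), ENNReal.ofReal (Real.sqrt (r ^ (-γ-1) * Real.sqrt (min r (1/(n:ℝ))))) * ENNReal.ofReal (Real.sqrt (r ^ (-γ-1) / Real.sqrt (min r (1/(n:ℝ)))) * |stepFun n u (r + t) - stepFun n u t|)) ^ 2 ≤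
      (∫⁻ r in Set.Ioi (0:ℝ), ENNReal.ofReal (Real.sqrt (r ^ (-γ-1) * Real.sqrt (min r (1/(n:ℝ))))) ^ 2) * ∫⁻ r in Set.Ioi (0:ℝ), ENNReal.ofReal (Real.sqrt (r ^ (-γ-1) / Real.sqrt (min r (1/(n:ℝ)))) * |stepFun n u (r + t) - stepFun n u t|) ^ 2 := by
    intro t
    have hconj : Real.HolderConjugate 2 2 := Real.HolderConjugate.two_two
    have hcs := ENNReal.lintegral_mul_le_Lp_mul_Lq (volume.restrict (Set.Ioi 0)) hconj
      haF.aemeasurable (hbF t).aemeasurable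
    have hsq2 : ∀ X : ENNReal, X ^ (2:ℝ) = X ^ (2:ℕ) := fun X => by
      rw [← ENNReal.rpow_natCast X 2]; norm_num
    have hhalf : ∀ X : ENNReal, (X ^ ((1:ℝ)/2)) ^ (2:ℕ) = X := fun X => by
      rw [← ENNReal.rpow_natCast (X ^ ((1:ℝ)/2)) 2, ← ENNReal.rpow_mul]
      norm_num
    have hcs' : ∫⁻ r in Set.Ioi (0:ℝ), ENNReal.ofReal (Real.sqrt (r ^ (-γ-1) * Real.sqrt (min r (1/(n:ℝ))))) * ENNReal.ofReal (Real.sqrt (r ^ (-γ-1) / Real.sqrt (min r (1/(n:ℝ)))) * |stepFun n u (r + t) - stepFun n u t|) ≤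
        (∫⁻ r in Set.Ioi (0:ℝ), ENNReal.ofReal (Real.sqrt (r ^ (-γ-1) * Real.sqrt (min r (1/(n:ℝ))))) ^ (2:ℕ)) ^ ((1:ℝ)/2) *
          (∫⁻ r in Set.Ioi (0:ℝ), ENNReal.ofReal (Real.sqrt (r ^ (-γ-1) / Real.sqrt (min r (1/(n:ℝ)))) * |stepFun n u (r + t) - stepFun n u t|) ^ (2:ℕ)) ^ ((1:ℝ)/2) := by
      simp only [Pi.mul_apply, hsq2] at hcs
      exact hcs
    calc (∫⁻ r in Set.Ioi (0:ℝ), ENNReal.ofReal (Real.sqrt (r ^ (-γ-1) * Real.sqrt (min r (1/(n:ℝ))))) * ENNReal.ofReal (Real.sqrt (r ^ (-γ-1) / Real.sqrt (min r (1/(n:ℝ)))) * |stepFun n u (r + t) - stepFun n u t|)) ^ 2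
        ≤ ((∫⁻ r in Set.Ioi (0:ℝ), ENNReal.ofReal (Real.sqrt (r ^ (-γ-1) * Real.sqrt (min r (1/(n:ℝ))))) ^ (2:ℕ)) ^ ((1:ℝ)/2) *
            (∫⁻ r in Set.Ioi (0:ℝ), ENNReal.ofReal (Real.sqrt (r ^ (-γ-1) / Real.sqrt (min r (1/(n:ℝ)))) * |stepFun n u (r + t) - stepFun n u t|) ^ (2:ℕ)) ^ ((1:ℝ)/2)) ^ 2 :=
          pow_le_pow_left₀ (by positivity) hcs' 2
      _ = (∫⁻ r in Set.Ioi (0:ℝ), ENNReal.ofReal (Real.sqrt (r ^ (-γ-1) * Real.sqrt (min r (1/(n:ℝ))))) ^ 2) *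
            ∫⁻ r in Set.Ioi (0:ℝ), ENNReal.ofReal (Real.sqrt (r ^ (-γ-1) / Real.sqrt (min r (1/(n:ℝ)))) * |stepFun n u (r + t) - stepFun n u t|) ^ 2 := by
          rw [mul_pow, hhalf, hhalf]
  have hA : (∫⁻ r in Set.Ioi (0:ℝ), ENNReal.ofReal (Real.sqrt (r ^ (-γ-1) * Real.sqrt (min r (1/(n:ℝ))))) ^ 2) ≤
      ENNReal.ofReal (K * (1/(n:ℝ)) ^ ((1:ℝ)/2 - γ)) := by
    have e : ∀ r ∈ Set.Ioi (0:ℝ), ENNReal.ofReal (Real.sqrt (r ^ (-γ-1) * Real.sqrt (min r (1/(n:ℝ))))) ^ 2 =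
        ENNReal.ofReal (r ^ (-γ-1) * Real.sqrt (min r (1/(n:ℝ)))) := by
      intro r hr
      rw [← ENNReal.ofReal_pow (Real.sqrt_nonneg _),
        Real.sq_sqrt (mul_nonneg (Real.rpow_nonneg (le_of_lt hr) _) (Real.sqrt_nonneg _))]
    rw [setLIntegral_congr_fun measurableSet_Ioi e, hK_def]
    exact A_bound γ (1/(n:ℝ)) hγ0 hγ hδ
  have hAne : (∫⁻ r in Set.Ioi (0:ℝ), ENNReal.ofReal (Real.sqrt (r ^ (-γ-1) * Real.sqrt (min r (1/(n:ℝ))))) ^ 2) ≠ ⊤ :=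
    ne_top_of_le_ne_top ENNReal.ofReal_ne_top hA
  have h4 : ∀ r ∈ Set.Ioi (0:ℝ), (∫⁻ t : ℝ, ENNReal.ofReal (Real.sqrt (r ^ (-γ-1) / Real.sqrt (min r (1/(n:ℝ)))) * |stepFun n u (r + t) - stepFun n u t|) ^ 2) ≤
      ENNReal.ofReal (4 * ∑ i, u i ^ 2) * ENNReal.ofReal (Real.sqrt (r ^ (-γ-1) * Real.sqrt (min r (1/(n:ℝ))))) ^ 2 := by
    intro r hr
    rw [Set.mem_Ioi] at hr
    have hm : 0 < min r (1/(n:ℝ)) := lt_min hr hδ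
    have hsm : 0 < Real.sqrt (min r (1/(n:ℝ))) := Real.sqrt_pos.2 hm
    have hkr : 0 ≤ r ^ (-γ-1) := Real.rpow_nonneg hr.le _
    have hq : 0 ≤ r ^ (-γ-1) / Real.sqrt (min r (1/(n:ℝ))) := div_nonneg hkr hsm.le
    have e1 : ∀ t : ℝ, ENNReal.ofReal (Real.sqrt (r ^ (-γ-1) / Real.sqrt (min r (1/(n:ℝ)))) * |stepFun n u (r + t) - stepFun n u t|) ^ 2 =
        ENNReal.ofReal (r ^ (-γ-1) / Real.sqrt (min r (1/(n:ℝ)))) *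
          ENNReal.ofReal ((stepFun n u (r + t) - stepFun n u t)^2) := by
      intro t
      rw [← ENNReal.ofReal_pow (mul_nonneg (Real.sqrt_nonneg _) (abs_nonneg _)), mul_pow,
        Real.sq_sqrt hq, sq_abs, ENNReal.ofReal_mul hq]
    simp_rw [e1]
    rw [lintegral_const_mul' _ _ ENNReal.ofReal_ne_top]
    calc ENNReal.ofReal (r ^ (-γ-1) / Real.sqrt (min r (1/(n:ℝ)))) *
          ∫⁻ t : ℝ, ENNReal.ofReal ((stepFun n u (r + t) - stepFun n u t)^2)
        ≤ ENNReal.ofReal (r ^ (-γ-1) / Real.sqrt (min r (1/(n:ℝ)))) *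
            ENNReal.ofReal (4 * min r (1/(n:ℝ)) * ∑ i, u i ^ 2) :=
          mul_le_mul_right (step_translation n hn u r hr) _
      _ = ENNReal.ofReal (4 * (∑ i, u i ^ 2) *
            (r ^ (-γ-1) * Real.sqrt (min r (1/(n:ℝ))))) := by
          rw [← ENNReal.ofReal_mul hq]
          congr 1
          have e2 : r ^ (-γ-1) / Real.sqrt (min r (1/(n:ℝ))) *
              (4 * min r (1/(n:ℝ)) * ∑ i, u i ^ 2) =
              4 * (∑ i, u i ^ 2) *
                (r ^ (-γ-1) * (min r (1/(n:ℝ)) / Real.sqrt (min r (1/(n:ℝ))))) := by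
            ring
          rw [e2, Real.div_sqrt]
      _ = ENNReal.ofReal (4 * ∑ i, u i ^ 2) * ENNReal.ofReal (Real.sqrt (r ^ (-γ-1) * Real.sqrt (min r (1/(n:ℝ))))) ^ 2 := by
          rw [← ENNReal.ofReal_pow (Real.sqrt_nonneg _),
            Real.sq_sqrt (mul_nonneg hkr (Real.sqrt_nonneg _)),
            ← ENNReal.ofReal_mul (by positivity)]
  have h5 : ∫⁻ t in Set.Ioi (0:ℝ), ∫⁻ r in Set.Ioi (0:ℝ), ENNReal.ofReal (Real.sqrt (r ^ (-γ-1) / Real.sqrt (min r (1/(n:ℝ)))) * |stepFun n u (r + t) - stepFun n u t|) ^ 2 ≤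
      ENNReal.ofReal (4 * ∑ i, u i ^ 2) * ∫⁻ r in Set.Ioi (0:ℝ), ENNReal.ofReal (Real.sqrt (r ^ (-γ-1) * Real.sqrt (min r (1/(n:ℝ))))) ^ 2 := by
    calc ∫⁻ t in Set.Ioi (0:ℝ), ∫⁻ r in Set.Ioi (0:ℝ), ENNReal.ofReal (Real.sqrt (r ^ (-γ-1) / Real.sqrt (min r (1/(n:ℝ)))) * |stepFun n u (r + t) - stepFun n u t|) ^ 2
        ≤ ∫⁻ t : ℝ, ∫⁻ r in Set.Ioi (0:ℝ), ENNReal.ofReal (Real.sqrt (r ^ (-γ-1) / Real.sqrt (min r (1/(n:ℝ)))) * |stepFun n u (r + t) - stepFun n u t|) ^ 2 := setLIntegral_le_lintegral _ _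
      _ = ∫⁻ r in Set.Ioi (0:ℝ), ∫⁻ t : ℝ, ENNReal.ofReal (Real.sqrt (r ^ (-γ-1) / Real.sqrt (min r (1/(n:ℝ)))) * |stepFun n u (r + t) - stepFun n u t|) ^ 2 :=
          lintegral_lintegral_swap hbm.aemeasurable
      _ ≤ ∫⁻ r in Set.Ioi (0:ℝ), ENNReal.ofReal (4 * ∑ i, u i ^ 2) * ENNReal.ofReal (Real.sqrt (r ^ (-γ-1) * Real.sqrt (min r (1/(n:ℝ))))) ^ 2 :=
          lintegral_mono_ae ((ae_restrict_iff' measurableSet_Ioi).2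
            (Filter.Eventually.of_forall h4))
      _ = ENNReal.ofReal (4 * ∑ i, u i ^ 2) * ∫⁻ r in Set.Ioi (0:ℝ), ENNReal.ofReal (Real.sqrt (r ^ (-γ-1) * Real.sqrt (min r (1/(n:ℝ))))) ^ 2 :=
          lintegral_const_mul' _ _ ENNReal.ofReal_ne_top
  have mainE : ∫⁻ t in Set.Ioi (0:ℝ), ENNReal.ofReal ((marchaudDeriv γ (stepFun n u) t)^2) ≤
      ENNReal.ofReal (4 * c^2 * K^2 * (1/(n:ℝ)) ^ (1 - 2*γ) * ∑ i, u i ^ 2) := by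
    calc ∫⁻ t in Set.Ioi (0:ℝ), ENNReal.ofReal ((marchaudDeriv γ (stepFun n u) t)^2)
        ≤ ∫⁻ t in Set.Ioi (0:ℝ), (ENNReal.ofReal c ^ 2 *
            ∫⁻ r in Set.Ioi (0:ℝ), ENNReal.ofReal (Real.sqrt (r ^ (-γ-1) * Real.sqrt (min r (1/(n:ℝ))))) ^ 2) * ∫⁻ r in Set.Ioi (0:ℝ), ENNReal.ofReal (Real.sqrt (r ^ (-γ-1) / Real.sqrt (min r (1/(n:ℝ)))) * |stepFun n u (r + t) - stepFun n u t|) ^ 2 := by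
          apply lintegral_mono
          intro t
          dsimp only
          refine le_trans (h1 t) ?_
          rw [mul_assoc]
          exact mul_le_mul_right (h2 t) _
      _ = (ENNReal.ofReal c ^ 2 * ∫⁻ r in Set.Ioi (0:ℝ), ENNReal.ofReal (Real.sqrt (r ^ (-γ-1) * Real.sqrt (min r (1/(n:ℝ))))) ^ 2) *
            ∫⁻ t in Set.Ioi (0:ℝ), ∫⁻ r in Set.Ioi (0:ℝ), ENNReal.ofReal (Real.sqrt (r ^ (-γ-1) / Real.sqrt (min r (1/(n:ℝ)))) * |stepFun n u (r + t) - stepFun n u t|) ^ 2 :=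
          lintegral_const_mul' _ _
            (ENNReal.mul_ne_top (ENNReal.pow_ne_top ENNReal.ofReal_ne_top) hAne)
      _ ≤ (ENNReal.ofReal c ^ 2 * ∫⁻ r in Set.Ioi (0:ℝ), ENNReal.ofReal (Real.sqrt (r ^ (-γ-1) * Real.sqrt (min r (1/(n:ℝ))))) ^ 2) *
            (ENNReal.ofReal (4 * ∑ i, u i ^ 2) * ∫⁻ r in Set.Ioi (0:ℝ), ENNReal.ofReal (Real.sqrt (r ^ (-γ-1) * Real.sqrt (min r (1/(n:ℝ))))) ^ 2) :=
          mul_le_mul_right h5 _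
      _ ≤ (ENNReal.ofReal c ^ 2 * ENNReal.ofReal (K * (1/(n:ℝ)) ^ ((1:ℝ)/2 - γ))) *
            (ENNReal.ofReal (4 * ∑ i, u i ^ 2) *
              ENNReal.ofReal (K * (1/(n:ℝ)) ^ ((1:ℝ)/2 - γ))) :=
          mul_le_mul' (mul_le_mul_right hA _) (mul_le_mul_right hA _)
      _ = ENNReal.ofReal (4 * c^2 * K^2 * (1/(n:ℝ)) ^ (1 - 2*γ) * ∑ i, u i ^ 2) := by
          rw [← ENNReal.ofReal_pow hc.le, ← ENNReal.ofReal_mul (by positivity),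
            ← ENNReal.ofReal_mul (by positivity),
            ← ENNReal.ofReal_mul (by positivity)]
          congr 1
          have hpow : ((1/(n:ℝ)) ^ ((1:ℝ)/2 - γ))^2 = (1/(n:ℝ)) ^ (1 - 2*γ) := by
            rw [← Real.rpow_natCast ((1/(n:ℝ)) ^ ((1:ℝ)/2 - γ)) 2, ← Real.rpow_mul hδ.le]
            congr 1
            push_cast
            ring
          have e3 : c^2 * (K * (1/(n:ℝ)) ^ ((1:ℝ)/2 - γ)) *
              (4 * (∑ i, u i ^ 2) * (K * (1/(n:ℝ)) ^ ((1:ℝ)/2 - γ))) =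
              4 * c^2 * K^2 * ((1/(n:ℝ)) ^ ((1:ℝ)/2 - γ))^2 * ∑ i, u i ^ 2 := by
            ring
          rw [e3, hpow]
  rw [integral_eq_lintegral_of_nonneg_ae
    (Filter.Eventually.of_forall fun t => sq_nonneg _) hDm]
  refine ENNReal.toReal_le_of_le_ofReal ?_ mainE
  exact mul_nonneg (mul_nonneg (by positivity) (Real.rpow_nonneg hδ.le _)) hS
end

section
/- Let 0 < γ < 1/2. There exists a constant C > 0, depending only on γ, such that for every integer n ≥ 1 and every u ∈ ℝⁿ, Σ_{i=0}^{n−1} Σ_{j₁=i+1}^{n−1} Σ_{j₂=i+1}^{n−1} u_i² · I(i, j₁, j₂) ≤ C · Σ_{i=0}^{n−1} u_i². -/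
open MeasureTheory Finset

/-- `I(i,j₁,j₂) = ∫_i^{i+1} ((j₁+1−s)^{−γ} − (j₁−s)^{−γ})((j₂+1−s)^{−γ} − (j₂−s)^{−γ}) ds`. -/
noncomputable def Ikernel (γ : ℝ) (i j₁ j₂ : ℕ) : ℝ :=
  ∫ s in (i : ℝ)..((i : ℝ) + 1),
    (((j₁ : ℝ) + 1 - s) ^ (-γ) - ((j₁ : ℝ) - s) ^ (-γ)) *
      (((j₂ : ℝ) + 1 - s) ^ (-γ) - ((j₂ : ℝ) - s) ^ (-γ))

noncomputable def gker (γ : ℝ) (j : ℕ) (s : ℝ) : ℝ :=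
  ((j : ℝ) + 1 - s) ^ (-γ) - ((j : ℝ) - s) ^ (-γ)

lemma gker_meas (γ : ℝ) (j : ℕ) : Measurable (gker γ j) := by
  unfold gker
  exact ((measurable_const.sub measurable_id).pow_const _).sub
    ((measurable_const.sub measurable_id).pow_const _)

/-- telescoping -/
lemma gker_sum (γ : ℝ) (m n : ℕ) (h : m ≤ n) (s : ℝ) :
    ∑ j ∈ Ico m n, gker γ j s = ((n : ℝ) - s) ^ (-γ) - ((m : ℝ) - s) ^ (-γ) := by
  induction n, h using Nat.le_induction with
  | base => simp
  | succ n hmn ih =>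
      rw [Finset.sum_Ico_succ_top hmn, ih]
      unfold gker
      push_cast
      ring

lemma abs_gker_le {γ : ℝ} (hγ0 : 0 < γ) {i j : ℕ} (hij : i < j) {s : ℝ}
    (hs : s < (i : ℝ) + 1) : |gker γ j s| ≤ ((i : ℝ) + 1 - s) ^ (-γ) := by
  have hj : (i : ℝ) + 1 ≤ (j : ℝ) := by exact_mod_cast hij
  have hjs : (0 : ℝ) < (j : ℝ) - s := by linarith
  have his : (0 : ℝ) < (i : ℝ) + 1 - s := by linarith
  have hA : ((j : ℝ) + 1 - s) ^ (-γ) ≤ ((j : ℝ) - s) ^ (-γ) :=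
    Real.rpow_le_rpow_of_nonpos hjs (by linarith) (by linarith)
  have hA0 : (0 : ℝ) ≤ ((j : ℝ) + 1 - s) ^ (-γ) := Real.rpow_nonneg (by linarith) _
  have hB : ((j : ℝ) - s) ^ (-γ) ≤ ((i : ℝ) + 1 - s) ^ (-γ) :=
    Real.rpow_le_rpow_of_nonpos his (by linarith) (by linarith)
  rw [gker, abs_sub_comm, abs_of_nonneg (by linarith)]
  linarith

lemma dom_intInt {γ : ℝ} (hγ : γ < 1 / 2) (i : ℕ) :
    IntervalIntegrable (fun s => ((i : ℝ) + 1 - s) ^ (-(2 * γ))) volume (i : ℝ) ((i : ℝ) + 1) := by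
  have h := (intervalIntegral.intervalIntegrable_rpow'
      (show (-1 : ℝ) < -(2 * γ) by linarith) (a := 0) (b := 1)).comp_sub_left ((i : ℝ) + 1)
  simpa using h.symm

lemma ae_lt {i : ℕ} : ∀ᵐ s ∂(volume.restrict (Set.Ioc (i : ℝ) ((i : ℝ) + 1))),
    s < (i : ℝ) + 1 := by
  have h1 : ∀ᵐ s : ℝ ∂volume, s ≠ (i : ℝ) + 1 := by
    rw [ae_iff]
    simpa using measure_singleton ((i : ℝ) + 1)
  filter_upwards [ae_restrict_of_ae h1, ae_restrict_mem measurableSet_Ioc] with s h1 h2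
  exact lt_of_le_of_ne h2.2 h1

lemma prod_intInt {γ : ℝ} (hγ0 : 0 < γ) (hγ : γ < 1 / 2) {i j₁ j₂ : ℕ}
    (h₁ : i < j₁) (h₂ : i < j₂) :
    IntervalIntegrable (fun s => gker γ j₁ s * gker γ j₂ s) volume (i : ℝ) ((i : ℝ) + 1) := by
  have hle : (i : ℝ) ≤ (i : ℝ) + 1 := by linarith
  rw [intervalIntegrable_iff_integrableOn_Ioc_of_le hle]
  have hdom := (intervalIntegrable_iff_integrableOn_Ioc_of_le hle).mp (dom_intInt hγ i)
  refine hdom.mono' (((gker_meas γ j₁).mul (gker_meas γ j₂)).aestronglyMeasurable) ?_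
  filter_upwards [ae_lt] with s hs
  have his : (0 : ℝ) < (i : ℝ) + 1 - s := by linarith
  have b₁ := abs_gker_le hγ0 h₁ hs
  have b₂ := abs_gker_le hγ0 h₂ hs
  rw [norm_mul, Real.norm_eq_abs, Real.norm_eq_abs]
  calc |gker γ j₁ s| * |gker γ j₂ s|
      ≤ ((i : ℝ) + 1 - s) ^ (-γ) * ((i : ℝ) + 1 - s) ^ (-γ) :=
        mul_le_mul b₁ b₂ (abs_nonneg _) (Real.rpow_nonneg his.le _)
    _ = ((i : ℝ) + 1 - s) ^ (-(2 * γ)) := by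
        rw [← Real.rpow_add his]; ring_nf

lemma dom_integral {γ : ℝ} (hγ : γ < 1 / 2) (i : ℕ) :
    ∫ s in (i : ℝ)..((i : ℝ) + 1), ((i : ℝ) + 1 - s) ^ (-(2 * γ)) = 1 / (1 - 2 * γ) := by
  have h := intervalIntegral.integral_comp_sub_left
    (a := (i : ℝ)) (b := (i : ℝ) + 1) (fun x => x ^ (-(2 * γ))) ((i : ℝ) + 1)
  rw [h]
  simp only [add_sub_cancel_left, sub_self]
  rw [integral_rpow (Or.inl (by linarith))]
  rw [Real.one_rpow, Real.zero_rpow (by intro h'; linarith [h'] : -(2*γ) + 1 ≠ 0)]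
  field_simp
  ring

set_option maxHeartbeats 1000000 in
lemma inner_sum_le {γ : ℝ} (hγ0 : 0 < γ) (hγ : γ < 1 / 2) {i n : ℕ} (hin : i < n) :
    ∑ j₁ ∈ Ico (i + 1) n, ∑ j₂ ∈ Ico (i + 1) n, Ikernel γ i j₁ j₂ ≤ 1 / (1 - 2 * γ) := by
  have hle : (i : ℝ) ≤ (i : ℝ) + 1 := by linarith
  have hmem : ∀ j ∈ Ico (i + 1) n, i < j := fun j hj => (Finset.mem_Ico.mp hj).1
  have hint : ∀ j₁ ∈ Ico (i + 1) n, ∀ j₂ ∈ Ico (i + 1) n,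
      IntervalIntegrable (fun s => gker γ j₁ s * gker γ j₂ s) volume (i : ℝ) ((i : ℝ) + 1) :=
    fun j₁ h₁ j₂ h₂ => prod_intInt hγ0 hγ (hmem _ h₁) (hmem _ h₂)
  have hj₁ : ∀ j₁ ∈ Ico (i + 1) n,
      IntervalIntegrable (fun s => ∑ j₂ ∈ Ico (i + 1) n, gker γ j₁ s * gker γ j₂ s)
        volume (i : ℝ) ((i : ℝ) + 1) := by
    intro j₁ h₁
    have h := IntervalIntegrable.sum (μ := volume) (a := (i : ℝ)) (b := (i : ℝ) + 1)
      (Ico (i + 1) n) (f := fun j₂ => fun s => gker γ j₁ s * gker γ j₂ s)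
      (fun j₂ h₂ => hint j₁ h₁ j₂ h₂)
    have e : (∑ j₂ ∈ Ico (i + 1) n, fun s => gker γ j₁ s * gker γ j₂ s)
        = fun s => ∑ j₂ ∈ Ico (i + 1) n, gker γ j₁ s * gker γ j₂ s := by
      funext s; simp
    exact e ▸ h
  have hTT : IntervalIntegrable
      (fun s => (∑ j ∈ Ico (i + 1) n, gker γ j s) * ∑ j ∈ Ico (i + 1) n, gker γ j s)
      volume (i : ℝ) ((i : ℝ) + 1) := by
    have h := IntervalIntegrable.sum (μ := volume) (a := (i : ℝ)) (b := (i : ℝ) + 1)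
      (Ico (i + 1) n)
      (f := fun j₁ => fun s => ∑ j₂ ∈ Ico (i + 1) n, gker γ j₁ s * gker γ j₂ s)
      hj₁
    have h' : IntervalIntegrable
        (fun s => ∑ j₁ ∈ Ico (i + 1) n, ∑ j₂ ∈ Ico (i + 1) n, gker γ j₁ s * gker γ j₂ s)
        volume (i : ℝ) ((i : ℝ) + 1) := by
      have e : (∑ j₁ ∈ Ico (i + 1) n, fun s => ∑ j₂ ∈ Ico (i + 1) n, gker γ j₁ s * gker γ j₂ s)
          = fun s => ∑ j₁ ∈ Ico (i + 1) n, ∑ j₂ ∈ Ico (i + 1) n, gker γ j₁ s * gker γ j₂ s := by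
        funext s; simp
      exact e ▸ h
    have heq : (fun s => (∑ j ∈ Ico (i + 1) n, gker γ j s) * ∑ j ∈ Ico (i + 1) n, gker γ j s)
        = fun s => ∑ j₁ ∈ Ico (i + 1) n, ∑ j₂ ∈ Ico (i + 1) n, gker γ j₁ s * gker γ j₂ s := by
      funext s; exact Finset.sum_mul_sum _ _ _ _
    rw [heq]; exact h'
  have hsum : ∑ j₁ ∈ Ico (i + 1) n, ∑ j₂ ∈ Ico (i + 1) n, Ikernel γ i j₁ j₂ =
      ∫ s in (i : ℝ)..((i : ℝ) + 1),
        (∑ j ∈ Ico (i + 1) n, gker γ j s) * ∑ j ∈ Ico (i + 1) n, gker γ j s := by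
    have e1 : ∀ j₁ ∈ Ico (i + 1) n,
        ∑ j₂ ∈ Ico (i + 1) n, Ikernel γ i j₁ j₂ =
          ∫ s in (i : ℝ)..((i : ℝ) + 1),
            ∑ j₂ ∈ Ico (i + 1) n, gker γ j₁ s * gker γ j₂ s := by
      intro j₁ h₁
      rw [intervalIntegral.integral_finset_sum (fun j₂ h₂ => hint j₁ h₁ j₂ h₂)]
      rfl
    rw [Finset.sum_congr rfl e1, ← intervalIntegral.integral_finset_sum hj₁]
    congr 1
    funext s
    exact (Finset.sum_mul_sum _ _ _ _).symm
  rw [hsum, ← dom_integral hγ i]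
  refine intervalIntegral.integral_mono_ae_restrict hle hTT (dom_intInt hγ i) ?_
  have h1 : ∀ᵐ s : ℝ ∂volume, s ≠ (i : ℝ) + 1 := by
    rw [ae_iff]; simpa using measure_singleton ((i : ℝ) + 1)
  filter_upwards [ae_restrict_of_ae h1, ae_restrict_mem measurableSet_Icc] with s hne hmem'
  have hs : s < (i : ℝ) + 1 := lt_of_le_of_ne hmem'.2 hne
  have hn' : (i : ℝ) + 1 ≤ (n : ℝ) := by exact_mod_cast hin
  have his : (0 : ℝ) < (i : ℝ) + 1 - s := by linarith
  have hns : (0 : ℝ) < (n : ℝ) - s := by linarith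
  have hTs : ∑ j ∈ Ico (i + 1) n, gker γ j s
      = ((n : ℝ) - s) ^ (-γ) - ((i : ℝ) + 1 - s) ^ (-γ) := by
    have h := gker_sum γ (i + 1) n hin s
    push_cast at h
    exact h
  have hN0 : (0 : ℝ) ≤ ((n : ℝ) - s) ^ (-γ) := Real.rpow_nonneg hns.le _
  have hNB : ((n : ℝ) - s) ^ (-γ) ≤ ((i : ℝ) + 1 - s) ^ (-γ) :=
    Real.rpow_le_rpow_of_nonpos his (by linarith) (by linarith)
  have habs : |∑ j ∈ Ico (i + 1) n, gker γ j s| ≤ ((i : ℝ) + 1 - s) ^ (-γ) := by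
    rw [hTs, abs_sub_comm, abs_of_nonneg (by linarith)]
    linarith
  calc (∑ j ∈ Ico (i + 1) n, gker γ j s) * ∑ j ∈ Ico (i + 1) n, gker γ j s
      = |∑ j ∈ Ico (i + 1) n, gker γ j s| * |∑ j ∈ Ico (i + 1) n, gker γ j s| :=
        (abs_mul_abs_self _).symm
    _ ≤ ((i : ℝ) + 1 - s) ^ (-γ) * ((i : ℝ) + 1 - s) ^ (-γ) :=
        mul_le_mul habs habs (abs_nonneg _) (Real.rpow_nonneg his.le _)
    _ = ((i : ℝ) + 1 - s) ^ (-(2 * γ)) := by rw [← Real.rpow_add his]; ring_nf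

/-- for `0 < γ < 1/2` there is `C > 0`, depending only on `γ`, with
`∑_{i=0}^{n−1} ∑_{j₁=i+1}^{n−1} ∑_{j₂=i+1}^{n−1} uᵢ² I(i,j₁,j₂) ≤ C ∑_{i=0}^{n−1} uᵢ²`
for all `n ≥ 1` and all `u ∈ ℝⁿ`. -/
theorem Ikernel_sum_ui_bound (γ : ℝ) (hγ0 : 0 < γ) (hγ : γ < 1 / 2) :
    ∃ C : ℝ, 0 < C ∧ ∀ n : ℕ, 1 ≤ n → ∀ u : ℕ → ℝ,
      ∑ i ∈ range n, ∑ j₁ ∈ Ico (i + 1) n, ∑ j₂ ∈ Ico (i + 1) n,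
          u i ^ 2 * Ikernel γ i j₁ j₂ ≤
        C * ∑ i ∈ range n, u i ^ 2 := by
  have h12 : (0:ℝ) < 1 - 2 * γ := by linarith
  refine ⟨1 / (1 - 2 * γ), by positivity, ?_⟩
  intro n hn u
  calc ∑ i ∈ range n, ∑ j₁ ∈ Ico (i + 1) n, ∑ j₂ ∈ Ico (i + 1) n,
        u i ^ 2 * Ikernel γ i j₁ j₂
      = ∑ i ∈ range n, u i ^ 2 *
          ∑ j₁ ∈ Ico (i + 1) n, ∑ j₂ ∈ Ico (i + 1) n, Ikernel γ i j₁ j₂ := by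
        refine Finset.sum_congr rfl fun i _ => ?_
        rw [Finset.mul_sum]
        exact Finset.sum_congr rfl fun j₁ _ => (Finset.mul_sum _ _ _).symm
    _ ≤ ∑ i ∈ range n, u i ^ 2 * (1 / (1 - 2 * γ)) := by
        refine Finset.sum_le_sum fun i hi => ?_
        exact mul_le_mul_of_nonneg_left
          (inner_sum_le hγ0 hγ (Finset.mem_range.mp hi)) (sq_nonneg _)
    _ = 1 / (1 - 2 * γ) * ∑ i ∈ range n, u i ^ 2 := by
        rw [← Finset.sum_mul]; ring
end

section
/- Let 0 < γ < 1/2. There exists a constant C > 0, depending only on γ, such that for every integer n ≥ 1 and every u ∈ ℝⁿ, the far off-diagonal part satisfies Σ_{i=0}^{n−1} Σ_{j₁=i+2}^{n−1} Σ_{j₂=i+2}^{n−1} u_i² · I(i, j₁, j₂) ≤ γ² · (Σ_{k=1}^{∞} k^{−γ−1})² · Σ_{i=0}^{n−1} u_i². -/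
open MeasureTheory Finset

/-- MVT bound: `a^{-γ} - (a+1)^{-γ} ≤ γ a^{-γ-1}` for `a ≥ 1`. -/
lemma rpow_diff_le_aux (γ : ℝ) (hγ0 : 0 < γ) {a : ℝ} (ha : 1 ≤ a) :
    a ^ (-γ) - (a + 1) ^ (-γ) ≤ γ * a ^ (-γ - 1) := by
  have ha0 : (0 : ℝ) < a := lt_of_lt_of_le one_pos ha
  obtain ⟨c, hc, hceq⟩ := exists_hasDerivAt_eq_slope (fun x => x ^ (-γ))
    (fun x => -γ * x ^ (-γ - 1)) (by linarith : a < a + 1)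
    (fun x hx => (Real.continuousAt_rpow_const x (-γ)
      (Or.inl (ne_of_gt (by have := hx.1; linarith)))).continuousWithinAt)
    (fun x hx => Real.hasDerivAt_rpow_const
      (Or.inl (ne_of_gt (by have := hx.1; linarith))))
  have hca : a ≤ c := le_of_lt hc.1
  have hcpow : c ^ (-γ - 1) ≤ a ^ (-γ - 1) :=
    Real.rpow_le_rpow_of_nonpos ha0 hca (by linarith)
  have : -γ * c ^ (-γ - 1) = (a + 1) ^ (-γ) - a ^ (-γ) := by
    rw [hceq]; ring_nf
  nlinarith [hcpow]

lemma factor_bound (γ : ℝ) (hγ0 : 0 < γ) (i j : ℕ) (hj : i + 2 ≤ j) {s : ℝ}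
    (hs : s ∈ Set.Icc (i : ℝ) ((i : ℝ) + 1)) :
    0 ≤ -(((j : ℝ) + 1 - s) ^ (-γ) - ((j : ℝ) - s) ^ (-γ)) ∧
    -(((j : ℝ) + 1 - s) ^ (-γ) - ((j : ℝ) - s) ^ (-γ)) ≤ γ * ((j : ℝ) - i - 1) ^ (-γ - 1) := by
  obtain ⟨hs1, hs2⟩ := hs
  have hji : (i : ℝ) + 2 ≤ (j : ℝ) := by exact_mod_cast hj
  have ha : (1 : ℝ) ≤ (j : ℝ) - s := by linarith
  have ha0 : (0 : ℝ) < (j : ℝ) - s := by linarith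
  constructor
  · have : ((j : ℝ) + 1 - s) ^ (-γ) ≤ ((j : ℝ) - s) ^ (-γ) :=
      Real.rpow_le_rpow_of_nonpos ha0 (by linarith) (by linarith)
    linarith
  · have h1 : ((j : ℝ) - s) ^ (-γ) - (((j : ℝ) - s) + 1) ^ (-γ) ≤ γ * ((j : ℝ) - s) ^ (-γ - 1) :=
      rpow_diff_le_aux γ hγ0 ha
    have h2 : ((j : ℝ) - s) ^ (-γ - 1) ≤ ((j : ℝ) - i - 1) ^ (-γ - 1) :=
      Real.rpow_le_rpow_of_nonpos (by linarith) (by linarith) (by linarith)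
    have heq : ((j : ℝ) - s) + 1 = (j : ℝ) + 1 - s := by ring
    rw [heq] at h1
    nlinarith [h1, h2, hγ0.le]

lemma Ikernel_le (γ : ℝ) (hγ0 : 0 < γ) (i j₁ j₂ : ℕ) (h1 : i + 2 ≤ j₁) (h2 : i + 2 ≤ j₂) :
    Ikernel γ i j₁ j₂ ≤
      (γ * ((j₁ : ℝ) - i - 1) ^ (-γ - 1)) * (γ * ((j₂ : ℝ) - i - 1) ^ (-γ - 1)) := by
  have hle : (i : ℝ) ≤ (i : ℝ) + 1 := by linarith
  have hcont : ∀ j : ℕ, i + 2 ≤ j → ContinuousOn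
      (fun s => (((j : ℝ) + 1 - s) ^ (-γ) - ((j : ℝ) - s) ^ (-γ)))
      (Set.Icc (i : ℝ) ((i : ℝ) + 1)) := by
    intro j hj
    have hji : (i : ℝ) + 2 ≤ (j : ℝ) := by exact_mod_cast hj
    apply ContinuousOn.sub
    · apply ContinuousOn.rpow_const (by fun_prop)
      intro x hx; left
      obtain ⟨_, hx2⟩ := hx
      have : (0:ℝ) < (j : ℝ) + 1 - x := by linarith
      positivity
    · apply ContinuousOn.rpow_const (by fun_prop)
      intro x hx; left
      obtain ⟨_, hx2⟩ := hx
      have : (0:ℝ) < (j : ℝ) - x := by linarith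
      positivity
  have hint : IntervalIntegrable (fun s =>
      (((j₁ : ℝ) + 1 - s) ^ (-γ) - ((j₁ : ℝ) - s) ^ (-γ)) *
      (((j₂ : ℝ) + 1 - s) ^ (-γ) - ((j₂ : ℝ) - s) ^ (-γ))) volume (i : ℝ) ((i : ℝ) + 1) := by
    apply ContinuousOn.intervalIntegrable
    rw [Set.uIcc_of_le hle]
    exact (hcont j₁ h1).mul (hcont j₂ h2)
  have hmono := intervalIntegral.integral_mono_on hle hint
    (intervalIntegrable_const (c := (γ * ((j₁ : ℝ) - i - 1) ^ (-γ - 1)) * (γ * ((j₂ : ℝ) - i - 1) ^ (-γ - 1))))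
    (fun s hs => by
      obtain ⟨hn1, hb1⟩ := factor_bound γ hγ0 i j₁ h1 hs
      obtain ⟨hn2, hb2⟩ := factor_bound γ hγ0 i j₂ h2 hs
      have := mul_le_mul hb1 hb2 hn2 (le_trans hn1 hb1)
      nlinarith [this])
  unfold Ikernel
  calc _ ≤ _ := hmono
    _ = _ := by rw [intervalIntegral.integral_const]; simp

lemma sum_bound (γ : ℝ) (hγ0 : 0 < γ) (hγ : γ < 1 / 2) (i n : ℕ) :
    ∑ j ∈ Ico (i + 2) n, γ * ((j : ℝ) - i - 1) ^ (-γ - 1) ≤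
      γ * ∑' k : ℕ, ((k : ℝ) + 1) ^ (-γ - 1) := by
  have hsum : Summable (fun k : ℕ => ((k : ℝ) + 1) ^ (-γ - 1)) := by
    have h0 : Summable (fun k : ℕ => ((k : ℝ)) ^ (-γ - 1)) :=
      Real.summable_nat_rpow.2 (by linarith)
    have := (summable_nat_add_iff (f := fun k : ℕ => ((k : ℝ)) ^ (-γ - 1)) 1).2 h0
    convert this using 2 with k
    · rfl
    push_cast; ring_nf
  rw [← Finset.mul_sum]
  apply mul_le_mul_of_nonneg_left _ hγ0.le
  rw [Finset.sum_Ico_eq_sum_range]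
  calc ∑ k ∈ range (n - (i + 2)), (((i + 2 + k : ℕ) : ℝ) - i - 1) ^ (-γ - 1)
      = ∑ k ∈ range (n - (i + 2)), ((k : ℝ) + 1) ^ (-γ - 1) := by
        apply Finset.sum_congr rfl; intro k _; push_cast; ring_nf
    _ ≤ ∑' k : ℕ, ((k : ℝ) + 1) ^ (-γ - 1) :=
        Summable.sum_le_tsum _ (fun k _ => by positivity) hsum

/-- for `0 < γ < 1/2`, the far off-diagonal part satisfies
`∑_{i=0}^{n−1} ∑_{j₁=i+2}^{n−1} ∑_{j₂=i+2}^{n−1} uᵢ² I(i,j₁,j₂)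
  ≤ γ² (∑_{k=1}^∞ k^{−γ−1})² ∑_{i=0}^{n−1} uᵢ²`
for all `n ≥ 1` and all `u ∈ ℝⁿ`. -/
theorem Ikernel_far_offdiagonal_bound (γ : ℝ) (hγ0 : 0 < γ) (hγ : γ < 1 / 2)
    (n : ℕ) (hn : 1 ≤ n) (u : ℕ → ℝ) :
    ∑ i ∈ range n, ∑ j₁ ∈ Ico (i + 2) n, ∑ j₂ ∈ Ico (i + 2) n,
        u i ^ 2 * Ikernel γ i j₁ j₂ ≤
      γ ^ 2 * (∑' k : ℕ, ((k : ℝ) + 1) ^ (-γ - 1)) ^ 2 * ∑ i ∈ range n, u i ^ 2 := by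
  set S := ∑' k : ℕ, ((k : ℝ) + 1) ^ (-γ - 1) with hS
  have key : ∀ i : ℕ, ∑ j₁ ∈ Ico (i + 2) n, ∑ j₂ ∈ Ico (i + 2) n, Ikernel γ i j₁ j₂ ≤
      γ ^ 2 * S ^ 2 := by
    intro i
    have hnn : ∀ j ∈ Ico (i + 2) n, 0 ≤ γ * ((j : ℝ) - i - 1) ^ (-γ - 1) := by
      intro j hj
      have : (i : ℝ) + 2 ≤ (j : ℝ) := by exact_mod_cast (mem_Ico.1 hj).1
      have h0 : (0 : ℝ) < (j : ℝ) - i - 1 := by linarith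
      positivity
    have step1 : ∑ j₁ ∈ Ico (i + 2) n, ∑ j₂ ∈ Ico (i + 2) n, Ikernel γ i j₁ j₂ ≤
        ∑ j₁ ∈ Ico (i + 2) n, ∑ j₂ ∈ Ico (i + 2) n,
          (γ * ((j₁ : ℝ) - i - 1) ^ (-γ - 1)) * (γ * ((j₂ : ℝ) - i - 1) ^ (-γ - 1)) := by
      apply Finset.sum_le_sum; intro j₁ hj₁
      apply Finset.sum_le_sum; intro j₂ hj₂
      exact Ikernel_le γ hγ0 i j₁ j₂ (mem_Ico.1 hj₁).1 (mem_Ico.1 hj₂).1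
    rw [← Finset.sum_mul_sum] at step1
    have hb := sum_bound γ hγ0 hγ i n
    have hsnn : 0 ≤ ∑ j ∈ Ico (i + 2) n, γ * ((j : ℝ) - i - 1) ^ (-γ - 1) :=
      Finset.sum_nonneg hnn
    calc _ ≤ _ := step1
      _ ≤ (γ * S) * (γ * S) := mul_le_mul hb hb hsnn (le_trans hsnn hb)
      _ = γ ^ 2 * S ^ 2 := by ring
  calc ∑ i ∈ range n, ∑ j₁ ∈ Ico (i + 2) n, ∑ j₂ ∈ Ico (i + 2) n,
        u i ^ 2 * Ikernel γ i j₁ j₂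
      = ∑ i ∈ range n, u i ^ 2 * ∑ j₁ ∈ Ico (i + 2) n, ∑ j₂ ∈ Ico (i + 2) n,
          Ikernel γ i j₁ j₂ := by
        apply Finset.sum_congr rfl; intro i _
        rw [Finset.mul_sum]; apply Finset.sum_congr rfl; intro j₁ _
        rw [Finset.mul_sum]
    _ ≤ ∑ i ∈ range n, u i ^ 2 * (γ ^ 2 * S ^ 2) := by
        apply Finset.sum_le_sum; intro i _
        exact mul_le_mul_of_nonneg_left (key i) (sq_nonneg _)
    _ = γ ^ 2 * S ^ 2 * ∑ i ∈ range n, u i ^ 2 := by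
        rw [← Finset.sum_mul]; ring
end

section
/- Let 0 < H < 1/2. There exists a constant C > 0, depending only on H, such that for every integer n ≥ 1, with δ = 1/n, and every u ∈ ℝⁿ, the quadratic form satisfies uᵀ P^(n) u ≥ C · δ · Σ_{i=0}^{n−1} u_i². Consequently every eigenvalue of P^(n) is at least C·δ, P^(n) is invertible, and ‖(P^(n))^{-1}‖₂ ≤ C^{-1} n. -/
open Matrix MeasureTheory

/-- The covariance matrix of fractional Gaussian noise with Hurst parameter `H`
on the equispaced grid of mesh `δ = 1/n` on `[0,1]`. -/
noncomputable def fgnCov (H : ℝ) (n : ℕ) : Matrix (Fin n) (Fin n) ℝ :=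
  fun i j =>
    ((1 / (n : ℝ)) ^ (2 * H) / 2) *
      ((|(i : ℝ) - (j : ℝ)| + 1) ^ (2 * H) + abs (|(i : ℝ) - (j : ℝ)| - 1) ^ (2 * H)
        - 2 * |(i : ℝ) - (j : ℝ)| ^ (2 * H))

/-- The spectral norm of a real square matrix: the operator norm induced by the
Euclidean norm. -/
noncomputable def specNorm {n : ℕ} (A : Matrix (Fin n) (Fin n) ℝ) : ℝ :=
  ‖Matrix.toEuclideanCLM (𝕜 := ℝ) A‖

namespace FgnAux
open Real Finset

noncomputable def D (a : ℝ) (m : ℕ) : ℝ := ((m : ℝ) + 1) ^ a - (m : ℝ) ^ a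

noncomputable def eR (a : ℝ) (k : ℕ) : ℝ :=
  ((k : ℝ) + 1) ^ a + |(k : ℝ) - 1| ^ a - 2 * (k : ℝ) ^ a

lemma eR_zero {a : ℝ} (ha : a ≠ 0) : eR a 0 = 2 := by
  simp [eR, Real.zero_rpow ha]
  norm_num

lemma eR_succ (a : ℝ) (k : ℕ) : eR a (k + 1) = D a (k + 1) - D a k := by
  have h : |((k + 1 : ℕ) : ℝ) - 1| = (k : ℝ) := by
    push_cast; simp
  simp only [eR, D, h]
  push_cast
  ring

lemma bern_aux {a x : ℝ} (ha0 : 0 < a) (ha1 : a < 1) (hx1 : 1 ≤ x) :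
    (x - 1) ^ a ≤ x ^ a * (1 + a * (-(1 / x))) := by
  have hx0 : (0 : ℝ) < x := by linarith
  have hinv : 1 / x ≤ 1 := by rw [div_le_one hx0]; exact hx1
  have hinv0 : 0 < 1 / x := by positivity
  have e : x - 1 = x * (1 + -(1 / x)) := by field_simp; ring
  rw [e, Real.mul_rpow hx0.le (by linarith)]
  exact mul_le_mul_of_nonneg_left
    (rpow_one_add_le_one_add_mul_self (by linarith) ha0.le ha1.le)
    (Real.rpow_nonneg hx0.le a)

lemma eR_succ_nonpos {a : ℝ} (ha0 : 0 < a) (ha1 : a < 1) (k : ℕ) : eR a (k + 1) ≤ 0 := by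
  set x : ℝ := (k : ℝ) + 1 with hxdef
  have hx1 : (1 : ℝ) ≤ x := by rw [hxdef]; have h0 : (0:ℝ) ≤ (k:ℝ) := Nat.cast_nonneg k; linarith
  have hx0 : (0 : ℝ) < x := by linarith
  have hxa : (0 : ℝ) ≤ x ^ a := Real.rpow_nonneg hx0.le a
  have hinv0 : 0 < 1 / x := by positivity
  have h1 : (x + 1) ^ a ≤ x ^ a * (1 + a * (1 / x)) := by
    have e : x + 1 = x * (1 + 1 / x) := by field_simp
    rw [e, Real.mul_rpow hx0.le (by positivity)]
    exact mul_le_mul_of_nonneg_left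
      (rpow_one_add_le_one_add_mul_self (by linarith) ha0.le ha1.le) hxa
  have h2 := bern_aux ha0 ha1 hx1
  have habs : |((k + 1 : ℕ) : ℝ) - 1| = x - 1 := by
    rw [abs_of_nonneg] <;> push_cast <;> simp [hxdef]
  have he : eR a (k + 1) = (x + 1) ^ a + (x - 1) ^ a - 2 * x ^ a := by
    simp only [eR, habs, hxdef]; push_cast; ring_nf
  rw [he]
  nlinarith

lemma D_ge {a : ℝ} (ha0 : 0 < a) (ha1 : a < 1) (m : ℕ) :
    a * ((m : ℝ) + 1) ^ (a - 1) ≤ D a m := by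
  set x : ℝ := (m : ℝ) + 1 with hxdef
  have hx1 : (1 : ℝ) ≤ x := by rw [hxdef]; have h0 : (0:ℝ) ≤ (m:ℝ) := Nat.cast_nonneg m; linarith
  have hx0 : (0 : ℝ) < x := by linarith
  have h2 := bern_aux ha0 ha1 hx1
  have hsub : x ^ (a - 1) = x ^ a / x := by
    rw [Real.rpow_sub hx0, Real.rpow_one]
  have hDm : D a m = x ^ a - (x - 1) ^ a := by
    simp only [D, hxdef]; ring_nf
  rw [hDm, hsub]
  have hx' : x ^ a * (1 + a * (-(1 / x))) = x ^ a - a * (x ^ a / x) := by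
    field_simp; ring
  nlinarith [h2]


/-- The unscaled matrix entry, defined over `ℕ`. -/
noncomputable def NE (a : ℝ) (i j : ℕ) : ℝ :=
  (|(i : ℝ) - (j : ℝ)| + 1) ^ a + |(|(i : ℝ) - (j : ℝ)|) - 1| ^ a
    - 2 * |(i : ℝ) - (j : ℝ)| ^ a

lemma NE_comm (a : ℝ) (i j : ℕ) : NE a i j = NE a j i := by
  simp only [NE, abs_sub_comm (i : ℝ) (j : ℝ)]

lemma NE_eq (a : ℝ) {i j : ℕ} (h : j ≤ i) : NE a i j = eR a (i - j) := by
  have habs : |(i : ℝ) - (j : ℝ)| = ((i - j : ℕ) : ℝ) := by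
    rw [Nat.cast_sub h, abs_of_nonneg]
    have : (j:ℝ) ≤ (i:ℝ) := Nat.cast_le.mpr h
    linarith
  simp only [NE, eR, habs]

lemma sum_eR {a : ℝ} (ha : a ≠ 0) (m : ℕ) :
    ∑ k ∈ range (m + 1), eR a k = 1 + D a m := by
  rw [Finset.sum_range_succ']
  have h1 : ∀ k ∈ range m, eR a (k + 1) = D a (k + 1) - D a k := fun k _ => eR_succ a k
  rw [Finset.sum_congr rfl h1, Finset.sum_range_sub (D a), eR_zero ha]
  have hD0 : D a 0 = 1 := by simp [D, Real.zero_rpow ha]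
  rw [hD0]; ring

lemma sum_eR_succ (a : ℝ) (m : ℕ) :
    ∑ k ∈ range m, eR a (k + 1) = D a m - D a 0 := by
  have h1 : ∀ k ∈ range m, eR a (k + 1) = D a (k + 1) - D a k := fun k _ => eR_succ a k
  rw [Finset.sum_congr rfl h1, Finset.sum_range_sub (D a)]

/-- Row sums of the unscaled matrix: telescoping. -/
lemma row_sum {a : ℝ} (ha : a ≠ 0) {n i : ℕ} (hi : i < n) :
    ∑ j ∈ range n, NE a i j = D a i + D a (n - 1 - i) := by
  have hsplit : ∑ j ∈ range n, NE a i j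
      = ∑ j ∈ range (i + 1), NE a i j + ∑ j ∈ Ico (i + 1) n, NE a i j := by
    rw [Finset.range_eq_Ico, ← Finset.sum_Ico_consecutive _ (Nat.zero_le (i+1)) hi,
      ← Finset.range_eq_Ico]
  have hpart1 : ∑ j ∈ range (i + 1), NE a i j = 1 + D a i := by
    rw [← Finset.sum_range_reflect]
    have : ∀ j ∈ range (i + 1), NE a i (i + 1 - 1 - j) = eR a j := by
      intro j hj
      have hj' : j ≤ i := by simpa [Nat.lt_succ_iff] using hj
      rw [show i + 1 - 1 - j = i - j from by omega, NE_eq a (Nat.sub_le i j),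
        show i - (i - j) = j from by omega]
    rw [Finset.sum_congr rfl this, sum_eR ha]
  have hpart2 : ∑ j ∈ Ico (i + 1) n, NE a i j = D a (n - 1 - i) - 1 := by
    rw [Finset.sum_Ico_eq_sum_range]
    have : ∀ k ∈ range (n - (i + 1)), NE a i (i + 1 + k) = eR a (k + 1) := by
      intro k hk
      rw [NE_comm, NE_eq a (by omega), show i + 1 + k - i = k + 1 from by omega]
    rw [Finset.sum_congr rfl this, sum_eR_succ]
    have hD0 : D a 0 = 1 := by simp [D, Real.zero_rpow ha]
    rw [show n - (i + 1) = n - 1 - i from by omega, hD0]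
  rw [hsplit, hpart1, hpart2]; ring

/-- Lower bound for the row sum. -/
lemma row_sum_ge {a : ℝ} (ha0 : 0 < a) (ha1 : a < 1) {n i : ℕ} (hi : i < n) :
    2 * a * (n : ℝ) ^ (a - 1) ≤ ∑ j ∈ range n, NE a i j := by
  rw [row_sum ha0.ne' hi]
  have key : ∀ m : ℕ, m < n → a * (n : ℝ) ^ (a - 1) ≤ D a m := by
    intro m hm
    refine le_trans ?_ (D_ge ha0 ha1 m)
    have hle : ((m : ℝ) + 1) ≤ (n : ℝ) := by
      have := Nat.cast_le (α := ℝ).mpr (Nat.succ_le_of_lt hm); push_cast at this; linarith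
    have := Real.rpow_le_rpow_of_nonpos (by positivity) hle (by linarith : a - 1 ≤ 0)
    nlinarith [this]
  have h1 := key i hi
  have h2 := key (n - 1 - i) (by omega)
  linarith

open Matrix in
lemma entry_eq (H : ℝ) (n : ℕ) (i j : Fin n) :
    fgnCov H n i j = ((1 / (n : ℝ)) ^ (2 * H) / 2) * NE (2 * H) (i : ℕ) (j : ℕ) := rfl

open Matrix in
/-- The key quadratic-form lower bound. -/
lemma qf {H : ℝ} (hH0 : 0 < H) (hH : H < 1 / 2) {n : ℕ} (hn : 1 ≤ n) (u : Fin n → ℝ) :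
    2 * H * (1 / (n : ℝ)) * ∑ i, u i ^ 2 ≤ u ⬝ᵥ (fgnCov H n) *ᵥ u := by
  have ha0 : 0 < 2 * H := by linarith
  have ha1 : 2 * H < 1 := by linarith
  have hn0 : (0 : ℝ) < (n : ℝ) := by exact_mod_cast Nat.lt_of_lt_of_le Nat.zero_lt_one hn
  set a : ℝ := 2 * H with hadef
  set c : ℝ := (1 / (n : ℝ)) ^ a / 2 with hcdef
  have hc : 0 < c := by
    have := Real.rpow_pos_of_pos (show (0:ℝ) < 1 / (n:ℝ) by positivity) a
    rw [hcdef]; linarith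
  set A : Matrix (Fin n) (Fin n) ℝ := fgnCov H n with hAdef
  have hentry : ∀ i j : Fin n, A i j = c * NE a (i : ℕ) (j : ℕ) := fun i j => rfl
  have hsym : ∀ i j : Fin n, A i j = A j i := by
    intro i j; rw [hentry, hentry, NE_comm]
  have hoff : ∀ i j : Fin n, i ≠ j → A i j ≤ 0 := by
    have main : ∀ i j : Fin n, (j : ℕ) ≤ (i : ℕ) → i ≠ j → A i j ≤ 0 := by
      intro i j h hij
      rw [hentry, NE_eq a h]
      have hne : (i : ℕ) - (j : ℕ) ≠ 0 := by
        have : (i : ℕ) ≠ (j : ℕ) := fun hc => hij (Fin.ext hc)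
        omega
      obtain ⟨k, hk⟩ := Nat.exists_eq_succ_of_ne_zero hne
      rw [hk]
      exact mul_nonpos_of_nonneg_of_nonpos hc.le (eR_succ_nonpos ha0 ha1 k)
    intro i j hij
    rcases le_total (j : ℕ) (i : ℕ) with h | h
    · exact main i j h hij
    · rw [hsym]; exact main j i h (Ne.symm hij)
  -- expand the quadratic form
  have hexpand : u ⬝ᵥ A *ᵥ u = ∑ i, ∑ j, A i j * (u i * u j) := by
    simp only [dotProduct, Matrix.mulVec, Finset.mul_sum]
    exact Finset.sum_congr rfl fun i _ => Finset.sum_congr rfl fun j _ => by ring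
  -- step A : termwise bound
  have hstepA : ∑ i, ∑ j, A i j * ((u i ^ 2 + u j ^ 2) / 2)
      ≤ ∑ i, ∑ j, A i j * (u i * u j) := by
    refine Finset.sum_le_sum fun i _ => Finset.sum_le_sum fun j _ => ?_
    by_cases hij : i = j
    · subst hij; apply le_of_eq; ring
    · have h1 : u i * u j ≤ (u i ^ 2 + u j ^ 2) / 2 := by nlinarith [sq_nonneg (u i - u j)]
      exact mul_le_mul_of_nonpos_left h1 (hoff i j hij)
  -- step B : rewrite the LHS using symmetry
  have hstepB : ∑ i, ∑ j, A i j * ((u i ^ 2 + u j ^ 2) / 2)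
      = ∑ i, (∑ j, A i j) * u i ^ 2 := by
    have h1 : ∀ i j : Fin n, A i j * ((u i ^ 2 + u j ^ 2) / 2)
        = A i j * u i ^ 2 / 2 + A i j * u j ^ 2 / 2 := fun i j => by ring
    simp_rw [h1, Finset.sum_add_distrib]
    have h2 : ∑ i, ∑ j, A i j * u j ^ 2 / 2 = ∑ i, ∑ j, A i j * u i ^ 2 / 2 := by
      rw [Finset.sum_comm]
      exact Finset.sum_congr rfl fun i _ => Finset.sum_congr rfl fun j _ => by rw [hsym]
    rw [h2, ← Finset.sum_add_distrib]
    refine Finset.sum_congr rfl fun i _ => ?_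
    rw [← Finset.sum_add_distrib, Finset.sum_mul]
    exact Finset.sum_congr rfl fun j _ => by ring
  -- step C : row sums
  have hrow : ∀ i : Fin n, 2 * H * (1 / (n : ℝ)) ≤ ∑ j, A i j := by
    intro i
    have hsum : ∑ j, A i j = c * ∑ j ∈ Finset.range n, NE a (i : ℕ) j := by
      rw [Finset.mul_sum]
      rw [← Fin.sum_univ_eq_sum_range (fun j => c * NE a (i : ℕ) j) n]
      exact Finset.sum_congr rfl fun j _ => hentry i j
    rw [hsum]
    have hge := row_sum_ge ha0 ha1 (i.isLt)
    have h1 : (1 / (n : ℝ)) ^ a = (n : ℝ) ^ (-a) := by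
      rw [one_div, Real.inv_rpow hn0.le, ← Real.rpow_neg hn0.le]
    have h2 : (n : ℝ) ^ (-a) * (n : ℝ) ^ (a - 1) = 1 / (n : ℝ) := by
      rw [← Real.rpow_add hn0, show -a + (a - 1) = -1 by ring, Real.rpow_neg_one, one_div]
    have hkey : c * (2 * a * (n : ℝ) ^ (a - 1)) = a * (1 / (n : ℝ)) := by
      rw [hcdef, h1, ← h2]; ring
    calc 2 * H * (1 / (n : ℝ)) = c * (2 * a * (n : ℝ) ^ (a - 1)) := by rw [hkey, hadef]
      _ ≤ c * ∑ j ∈ Finset.range n, NE a (i : ℕ) j := by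
          exact mul_le_mul_of_nonneg_left hge hc.le
  calc 2 * H * (1 / (n : ℝ)) * ∑ i, u i ^ 2
      = ∑ i, (2 * H * (1 / (n : ℝ))) * u i ^ 2 := by rw [Finset.mul_sum]
    _ ≤ ∑ i, (∑ j, A i j) * u i ^ 2 :=
        Finset.sum_le_sum fun i _ => mul_le_mul_of_nonneg_right (hrow i) (sq_nonneg _)
    _ = ∑ i, ∑ j, A i j * ((u i ^ 2 + u j ^ 2) / 2) := hstepB.symm
    _ ≤ ∑ i, ∑ j, A i j * (u i * u j) := hstepA
    _ = u ⬝ᵥ A *ᵥ u := hexpand.symm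

end FgnAux

/-- for `0 < H < 1/2` there is `C > 0`, depending only on `H`, such
that for every `n ≥ 1` (with `δ = 1/n`): `uᵀ P^(n) u ≥ C δ ∑ uᵢ²` for all
`u ∈ ℝⁿ`; consequently every eigenvalue of `P^(n)` is at least `C δ`,
`P^(n)` is invertible, and `‖(P^(n))⁻¹‖₂ ≤ C⁻¹ n`. -/
theorem fgnCov_quadratic_form_lower_bound_small_H (H : ℝ) (hH0 : 0 < H) (hH : H < 1 / 2) :
    ∃ C : ℝ, 0 < C ∧ ∀ n : ℕ, 1 ≤ n →
      (∀ u : Fin n → ℝ,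
        C * (1 / (n : ℝ)) * ∑ i, u i ^ 2 ≤ u ⬝ᵥ (fgnCov H n) *ᵥ u) ∧
      (∀ μ : ℝ, Module.End.HasEigenvalue (Matrix.toLin' (fgnCov H n)) μ →
        C * (1 / (n : ℝ)) ≤ μ) ∧
      IsUnit (fgnCov H n) ∧
      specNorm (fgnCov H n)⁻¹ ≤ C⁻¹ * (n : ℝ) := by
  refine ⟨2 * H, by linarith, fun n hn => ?_⟩
  have hn0 : (0 : ℝ) < (n : ℝ) := by exact_mod_cast Nat.lt_of_lt_of_le Nat.zero_lt_one hn
  have hqf := fun u => FgnAux.qf hH0 hH hn u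
  have hSpos : ∀ v : Fin n → ℝ, v ≠ 0 → 0 < ∑ i, v i ^ 2 := by
    intro v hv
    obtain ⟨i, hi⟩ := Function.ne_iff.mp hv
    exact Finset.sum_pos' (fun j _ => sq_nonneg _)
      ⟨i, Finset.mem_univ i, pow_pos (abs_pos.mpr hi) 2 |> fun h => by simpa [sq_abs] using h⟩
  have hHn : (0 : ℝ) < 2 * H * (1 / (n : ℝ)) := by positivity
  have hdet : (fgnCov H n).det ≠ 0 := by
    intro h0
    obtain ⟨v, hv, hAv⟩ := (Matrix.exists_mulVec_eq_zero_iff).mpr h0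
    have h1 := hqf v
    rw [hAv, dotProduct_zero] at h1
    nlinarith [hSpos v hv]
  refine ⟨hqf, ?_, ?_, ?_⟩
  · intro μ hμ
    obtain ⟨v, hv⟩ := hμ.exists_hasEigenvector
    have happ : Matrix.toLin' (fgnCov H n) v = μ • v := hv.apply_eq_smul
    rw [Matrix.toLin'_apply] at happ
    have h1 := hqf v
    rw [happ] at h1
    have h2 : v ⬝ᵥ (μ • v) = μ * ∑ i, v i ^ 2 := by
      simp only [dotProduct, Pi.smul_apply, smul_eq_mul, Finset.mul_sum]
      exact Finset.sum_congr rfl fun i _ => by ring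
    rw [h2] at h1
    exact le_of_mul_le_mul_right h1 (hSpos v hv.right)
  · exact (Matrix.isUnit_iff_isUnit_det _).mpr (isUnit_iff_ne_zero.mpr hdet)
  · have hAinv : fgnCov H n * (fgnCov H n)⁻¹ = 1 := Matrix.mul_nonsing_inv _ (isUnit_iff_ne_zero.mpr hdet)
    show ‖Matrix.toEuclideanCLM (𝕜 := ℝ) (fgnCov H n)⁻¹‖ ≤ (2 * H)⁻¹ * (n : ℝ)
    refine ContinuousLinearMap.opNorm_le_bound _ (by positivity) ?_
    intro x
    set T := Matrix.toEuclideanCLM (𝕜 := ℝ) (fgnCov H n)⁻¹ with hT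
    set y : EuclideanSpace ℝ (Fin n) := T x with hy
    set x' : Fin n → ℝ := WithLp.equiv 2 _ x with hx'
    set yv : Fin n → ℝ := (fgnCov H n)⁻¹ *ᵥ x' with hyv
    have hyeq : WithLp.equiv 2 _ y = yv := by
      rw [hy, hT]; exact Matrix.ofLp_toEuclideanCLM _ _
    have hAyv : fgnCov H n *ᵥ yv = x' := by
      rw [hyv, Matrix.mulVec_mulVec, hAinv, Matrix.one_mulVec]
    have h1 := hqf yv
    rw [hAyv] at h1
    have hyvy : ∀ i, yv i = y i := fun i => by rw [← hyeq]; rfl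
    have hinner : (inner ℝ y x : ℝ) = yv ⬝ᵥ x' := by
      simp only [PiLp.inner_apply, RCLike.inner_apply, conj_trivial, dotProduct]
      exact Finset.sum_congr rfl fun i _ => by rw [hyvy i]; exact mul_comm _ _
    have hnormy : ‖y‖ ^ 2 = ∑ i, yv i ^ 2 := by
      rw [← real_inner_self_eq_norm_sq]
      simp only [PiLp.inner_apply, RCLike.inner_apply, conj_trivial]
      exact Finset.sum_congr rfl fun i _ => by rw [hyvy i]; ring
    have hCS : (inner ℝ y x : ℝ) ≤ ‖y‖ * ‖x‖ := real_inner_le_norm y x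
    have hmain : 2 * H * (1 / (n : ℝ)) * ‖y‖ ^ 2 ≤ ‖y‖ * ‖x‖ := by
      rw [hnormy]
      calc 2 * H * (1 / (n : ℝ)) * ∑ i, yv i ^ 2 ≤ yv ⬝ᵥ x' := h1
        _ = (inner ℝ y x : ℝ) := hinner.symm
        _ ≤ ‖y‖ * ‖x‖ := hCS
    rcases (norm_nonneg y).eq_or_lt with hy0 | hy0
    · rw [← hy0]; positivity
    · have h3 : 2 * H * (1 / (n : ℝ)) * ‖y‖ ≤ ‖x‖ := by nlinarith
      have h4 : ‖y‖ = (2 * H)⁻¹ * (n : ℝ) * (2 * H * (1 / (n : ℝ)) * ‖y‖) := by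
        field_simp
      rw [h4]
      calc (2 * H)⁻¹ * (n : ℝ) * (2 * H * (1 / (n : ℝ)) * ‖y‖)
          ≤ (2 * H)⁻¹ * (n : ℝ) * ‖x‖ := by
            exact mul_le_mul_of_nonneg_left h3 (by positivity)
end
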